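/- arXiv:2301.07324 — 3 statements merged into one kernel-verified Lean document; each statement's English description precedes it below -/
import Mathlib

section
/- (Finite-in-time nonrelativistic limit) Assume κ₂ > 0 and R^∞_{ij} > 0 for all i ≠ j. Fix initial data x_i⁰, w_i⁰ ∈ ℝ^d with x_i⁰ ≠ x_j⁰ for i ≠ j, max_i |w_i⁰| < c, and Ẽ_k^c(0) + E_p(0) < N + (κ₂/(4N))·min_{i≠j}(R^∞_{ij})², where Ẽ_k^c(0) := ∑_{i=1}^N [c²(Γ̃^c(w_i⁰) − 1) + Γ̃^c(w_i⁰)² − log Γ̃^c(w_i⁰)] with Γ̃^c(w) := c/√(c² − |w|²), and E_p(0) := (κ₂/(8N))∑_{i≠j}(|x_i⁰ − x_j⁰| − R^∞_{ij})². For each c' ∈ [c,∞) let {(x_i^{c'}, w_i^{c'})} be a global solution of the RCS model with bonding force and speed of light c' with these initial data, and let {(x_i^∞, w_i^∞)} be a global solution of the classical CS model with bonding force with the same initial data. Then for every T ∈ (0,∞): lim_{c'→∞} sup_{0 ≤ t ≤ T} ∑_{i=1}^N ( |x_i^{c'}(t) − x_i^∞(t)|² + |w_i^{c'}(t) − w_i^∞(t)|²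 ) = 0. -/
open scoped BigOperators ENNReal Topology
open Filter

noncomputable section

/-- Lorentz factor `Γ(v) = 1/√(1 - ‖v‖²/c²)`. -/
def lorentz {d : ℕ} (c : ℝ) (v : EuclideanSpace ℝ (Fin d)) : ℝ :=
  1 / Real.sqrt (1 - ‖v‖ ^ 2 / c ^ 2)

/-- `F(v) = Γ(v)(1 + Γ(v)/c²)`. -/
def Fmap {d : ℕ} (c : ℝ) (v : EuclideanSpace ℝ (Fin d)) : ℝ :=
  lorentz c v * (1 + lorentz c v / c ^ 2)

/-- Momentum-like observable `ŵ(v) = F(v) v`. -/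
def what {d : ℕ} (c : ℝ) (v : EuclideanSpace ℝ (Fin d)) : EuclideanSpace ℝ (Fin d) :=
  Fmap c v • v

/-- The time domain `[0, τ)` for `τ ∈ (0, ∞]`. -/
def dom (τ : ℝ≥0∞) : Set ℝ := {t : ℝ | 0 ≤ t ∧ ENNReal.ofReal t < τ}

/-- Right-hand side of the momentum equation of the (R)CS model with a bonding force:
`(κ₀/N)∑_j φ(|x_i−x_j|)(v_j−v_i) + (1/2N)∑_{j≠i} [κ₁⟨v_j−v_i,(x_j−x_i)/|x_j−x_i|⟩ + κ₂(|x_i−x_j|−R_ij)]·(x_j−x_i)/|x_j−x_i|`. -/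
def rcsForce {d : ℕ} (N : ℕ) (κ₀ κ₁ κ₂ : ℝ) (φ : ℝ → ℝ) (R : Fin N → Fin N → ℝ)
    (x v : Fin N → EuclideanSpace ℝ (Fin d)) (i : Fin N) : EuclideanSpace ℝ (Fin d) :=
  (κ₀ / (N : ℝ)) • ∑ j, φ ‖x i - x j‖ • (v j - v i)
    + (1 / (2 * (N : ℝ))) • ∑ j ∈ Finset.univ.filter (fun j => j ≠ i),
        ((κ₁ * ((inner ℝ (v j - v i) (x j - x i) : ℝ) / ‖x j - x i‖)
            + κ₂ * (‖x i - x j‖ - R i j)) / ‖x j - x i‖) • (x j - x i)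

/-- Solution of the relativistic Cucker–Smale model with bonding force and speed of light `c`
on `[0, τ)`: subluminal speeds, no collisions, `x_i' = v_i` and `w_i' = rcsForce` with
`w_i = ŵ(v_i)`. -/
def IsRCSSol {d : ℕ} (N : ℕ) (c κ₀ κ₁ κ₂ : ℝ) (φ : ℝ → ℝ) (R : Fin N → Fin N → ℝ)
    (τ : ℝ≥0∞) (x v : Fin N → ℝ → EuclideanSpace ℝ (Fin d)) : Prop :=
  ∀ t ∈ dom τ,
    (∀ i, ‖v i t‖ < c) ∧
    (∀ i j, i ≠ j → x i t ≠ x j t) ∧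
    (∀ i, HasDerivAt (x i) (v i t) t) ∧
    (∀ i, HasDerivAt (fun s => what c (v i s))
        (rcsForce N κ₀ κ₁ κ₂ φ R (fun k => x k t) (fun k => v k t) i) t)

/-- Relativistic kinetic energy `∑_i [c²(Γ_i − 1) + Γ_i² − log Γ_i]`. -/
def kinE {d : ℕ} (c : ℝ) {N : ℕ} (v : Fin N → EuclideanSpace ℝ (Fin d)) : ℝ :=
  ∑ i, (c ^ 2 * (lorentz c (v i) - 1) + (lorentz c (v i) ^ 2 - Real.log (lorentz c (v i))))

/-- Potential energy `(κ₂/8N) ∑_{i≠j} (|x_i − x_j| − R_ij)²`. -/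
def potE {d : ℕ} {N : ℕ} (κ₂ : ℝ) (R : Fin N → Fin N → ℝ)
    (x : Fin N → EuclideanSpace ℝ (Fin d)) : ℝ :=
  κ₂ / (8 * (N : ℝ)) * ∑ i, ∑ j ∈ Finset.univ.filter (fun j => j ≠ i), (‖x i - x j‖ - R i j) ^ 2

/-- Total relativistic energy. -/
def totE {d : ℕ} (c : ℝ) {N : ℕ} (κ₂ : ℝ) (R : Fin N → Fin N → ℝ)
    (x v : Fin N → EuclideanSpace ℝ (Fin d)) : ℝ :=
  kinE c v + potE κ₂ R x

/-- Solution of the classical Cucker–Smale model with bonding force on `[0, τ)`. -/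
def IsCSSol {d : ℕ} (N : ℕ) (κ₀ κ₁ κ₂ : ℝ) (φ : ℝ → ℝ) (R : Fin N → Fin N → ℝ)
    (τ : ℝ≥0∞) (x w : Fin N → ℝ → EuclideanSpace ℝ (Fin d)) : Prop :=
  ∀ t ∈ dom τ,
    (∀ i j, i ≠ j → x i t ≠ x j t) ∧
    (∀ i, HasDerivAt (x i) (w i t) t) ∧
    (∀ i, HasDerivAt (w i)
        (rcsForce N κ₀ κ₁ κ₂ φ R (fun k => x k t) (fun k => w k t) i) t)

/-- `Γ̃^c(w) = c/√(c² − |w|²)`, the Lorentz factor expressed via the momentum. -/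
def lorentzTilde {d : ℕ} (c : ℝ) (w : EuclideanSpace ℝ (Fin d)) : ℝ :=
  c / Real.sqrt (c ^ 2 - ‖w‖ ^ 2)

/-- Kinetic energy expressed through the momenta. -/
def kinETilde {d : ℕ} (c : ℝ) {N : ℕ} (w : Fin N → EuclideanSpace ℝ (Fin d)) : ℝ :=
  ∑ i, (c ^ 2 * (lorentzTilde c (w i) - 1)
    + (lorentzTilde c (w i) ^ 2 - Real.log (lorentzTilde c (w i))))


section AuxNRL
open Metric Real Set Filter
open scoped Topology
set_option maxHeartbeats 1000000

/-- A locally Lipschitz bounded function is "Lipschitz" on a compact set. -/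
lemma locLip_compact_bound {f : ℝ → ℝ} (hf : LocallyLipschitz f) {fM : ℝ}
    (hfb : ∀ r, |f r| ≤ fM) {s : Set ℝ} (hs : IsCompact s) :
    ∃ K : ℝ, 0 ≤ K ∧ ∀ a ∈ s, ∀ b ∈ s, |f a - f b| ≤ K * |a - b| := by
  choose Kf t ht hlip using hf
  obtain ⟨F, hFs, hF⟩ := hs.elim_nhds_subcover (fun x => interior (t x))
    (fun x _ => interior_mem_nhds.mpr (ht x))
  have hcov : s ⊆ ⋃ i : {x // x ∈ F}, interior (t i.1) := by
    intro a ha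
    obtain ⟨x, hx, hax⟩ := Set.mem_iUnion₂.1 (hF ha)
    exact Set.mem_iUnion.2 ⟨⟨x, hx⟩, hax⟩
  obtain ⟨δ, hδ, hleb⟩ := lebesgue_number_lemma_of_metric hs
    (fun i : {x // x ∈ F} => isOpen_interior) hcov
  set Km : NNReal := F.sup Kf with hKm
  have hfM : 0 ≤ fM := le_trans (abs_nonneg _) (hfb 0)
  refine ⟨max (Km : ℝ) (2 * fM / δ), le_trans (NNReal.coe_nonneg _) (le_max_left _ _), ?_⟩
  intro a ha b hb
  rcases lt_or_ge (dist a b) δ with hab | hab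
  · obtain ⟨i, hi⟩ := hleb a ha
    have hat : a ∈ t i.1 := interior_subset (hi (mem_ball_self hδ))
    have hbt : b ∈ t i.1 := interior_subset (hi (by rwa [mem_ball, dist_comm]))
    have := (hlip i.1).dist_le_mul b hbt a hat
    rw [Real.dist_eq, Real.dist_eq] at this
    calc |f a - f b| = |f b - f a| := abs_sub_comm _ _
      _ ≤ (Kf i.1 : ℝ) * |b - a| := this
      _ ≤ (Km : ℝ) * |a - b| := by
          rw [abs_sub_comm b a]
          exact mul_le_mul_of_nonneg_right
            (by exact_mod_cast Finset.le_sup i.2) (abs_nonneg _)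
      _ ≤ max (Km : ℝ) (2 * fM / δ) * |a - b| :=
          mul_le_mul_of_nonneg_right (le_max_left _ _) (abs_nonneg _)
  · have h1 : |f a - f b| ≤ 2 * fM := by
      have := abs_sub (f a) (f b)
      calc |f a - f b| ≤ |f a| + |f b| := abs_sub _ _
        _ ≤ fM + fM := add_le_add (hfb a) (hfb b)
        _ = 2 * fM := by ring
    have h2 : (2 * fM / δ) * δ ≤ (2 * fM / δ) * |a - b| := by
      apply mul_le_mul_of_nonneg_left _ (by positivity)
      rwa [Real.dist_eq] at hab
    rw [div_mul_cancel₀] at h2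
    · calc |f a - f b| ≤ 2 * fM := h1
        _ ≤ (2 * fM / δ) * |a - b| := h2
        _ ≤ max (Km : ℝ) (2 * fM / δ) * |a - b| :=
          mul_le_mul_of_nonneg_right (le_max_right _ _) (abs_nonneg _)
    · exact ne_of_gt hδ

variable {d : ℕ}
local notation "E" => EuclideanSpace ℝ (Fin d)

lemma lorentz_facts {c : ℝ} (hc : 0 < c) (v : EuclideanSpace ℝ (Fin d)) (hv : ‖v‖ < c) :
    1 ≤ lorentz c v ∧ lorentz c v ^ 2 = 1 / (1 - ‖v‖ ^ 2 / c ^ 2) := by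
  have h0 : (0:ℝ) ≤ ‖v‖ := norm_nonneg v
  have hs : 0 < 1 - ‖v‖ ^ 2 / c ^ 2 := by
    have h1 : ‖v‖ ^ 2 < c ^ 2 := by nlinarith
    have hc2 : (0:ℝ) < c ^ 2 := by positivity
    rw [sub_pos, div_lt_one hc2]; exact h1
  have hs1 : 1 - ‖v‖ ^ 2 / c ^ 2 ≤ 1 := by
    have : 0 ≤ ‖v‖ ^ 2 / c ^ 2 := by positivity
    linarith
  have hsq : Real.sqrt (1 - ‖v‖ ^ 2 / c ^ 2) ≤ 1 := by
    calc Real.sqrt (1 - ‖v‖ ^ 2 / c ^ 2) ≤ Real.sqrt 1 := Real.sqrt_le_sqrt hs1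
      _ = 1 := Real.sqrt_one
  have hsqpos : 0 < Real.sqrt (1 - ‖v‖ ^ 2 / c ^ 2) := Real.sqrt_pos.2 hs
  constructor
  · rw [lorentz, le_div_iff₀ hsqpos, one_mul]; exact hsq
  · rw [lorentz, div_pow, one_pow, Real.sq_sqrt hs.le]

lemma Fmap_ge_one {c : ℝ} (hc : 0 < c) (v : EuclideanSpace ℝ (Fin d)) (hv : ‖v‖ < c) :
    1 ≤ Fmap c v := by
  obtain ⟨h1, -⟩ := lorentz_facts hc v hv
  have h2 : 0 ≤ lorentz c v / c ^ 2 := by positivity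
  calc (1:ℝ) = 1 * 1 := by ring
    _ ≤ lorentz c v * (1 + lorentz c v / c ^ 2) := by nlinarith
    _ = Fmap c v := rfl

lemma norm_le_norm_what {c : ℝ} (hc : 0 < c) (v : EuclideanSpace ℝ (Fin d)) (hv : ‖v‖ < c) :
    ‖v‖ ≤ ‖what c v‖ := by
  rw [what, norm_smul, Real.norm_eq_abs,
    abs_of_nonneg (le_trans zero_le_one (Fmap_ge_one hc v hv))]
  nlinarith [norm_nonneg v, Fmap_ge_one hc v hv]

lemma what_sub_bound {c B : ℝ} (hB : 1 ≤ B) (hc : 2 * B + 1 ≤ c)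
    (v : EuclideanSpace ℝ (Fin d)) (hv : ‖v‖ ≤ B) :
    ‖what c v - v‖ ≤ 2 * B * (B ^ 2 + 1) / c ^ 2 := by
  have hcpos : 0 < c := by linarith
  have hvc : ‖v‖ < c := by linarith
  obtain ⟨hΓ1, hΓ2⟩ := lorentz_facts hcpos v hvc
  have hc2 : (0:ℝ) < c ^ 2 := by positivity
  have hs : 0 < 1 - ‖v‖ ^ 2 / c ^ 2 := by
    have h1 : ‖v‖ ^ 2 < c ^ 2 := by nlinarith [norm_nonneg v]
    rw [sub_pos, div_lt_one hc2]; exact h1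
  have hΓs : lorentz c v ^ 2 * (1 - ‖v‖ ^ 2 / c ^ 2) = 1 := by
    rw [hΓ2, one_div, inv_mul_cancel₀ hs.ne']
  have h2s : ‖v‖ ^ 2 / c ^ 2 ≤ 1 / 2 := by
    rw [div_le_iff₀ hc2]; nlinarith [norm_nonneg v]
  have hΓ2le : lorentz c v ^ 2 ≤ 2 := by
    rw [hΓ2, div_le_iff₀ hs]; linarith
  have hkey : Fmap c v - 1 ≤ (2 * B ^ 2 + 2) / c ^ 2 := by
    rw [show Fmap c v = lorentz c v * (1 + lorentz c v / c ^ 2) from rfl,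
      sub_le_iff_le_add, div_add' _ _ _ hc2.ne', le_div_iff₀ hc2]
    set Γ := lorentz c v with hΓdef
    have hΓΓ : c ^ 2 * (Γ ^ 2 - 1) = Γ ^ 2 * ‖v‖ ^ 2 := by
      field_simp at hΓs ⊢; nlinarith [hΓs]
    have hvB : ‖v‖ ^ 2 ≤ B ^ 2 := by nlinarith [norm_nonneg v]
    have hdiv : Γ / c ^ 2 * c ^ 2 = Γ := div_mul_cancel₀ _ hc2.ne'
    have hGG : Γ ≤ Γ ^ 2 := by nlinarith [mul_le_mul_of_nonneg_left hΓ1 (by linarith : (0:ℝ) ≤ Γ)]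
    have h1 : c ^ 2 * (Γ - 1) ≤ c ^ 2 * (Γ ^ 2 - 1) :=
      mul_le_mul_of_nonneg_left (by linarith) hc2.le
    have h2 : Γ ^ 2 * ‖v‖ ^ 2 ≤ 2 * B ^ 2 := by
      nlinarith [mul_le_mul_of_nonneg_right hΓ2le (sq_nonneg ‖v‖), sq_nonneg ‖v‖]
    nlinarith [hΓΓ, hdiv]
  have hwv : what c v - v = (Fmap c v - 1) • v := by
    rw [what, sub_smul, one_smul]
  rw [hwv, norm_smul, Real.norm_eq_abs,
    abs_of_nonneg (by linarith [Fmap_ge_one hcpos v hvc] : (0:ℝ) ≤ Fmap c v - 1)]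
  have hnn : (0:ℝ) ≤ (2 * B ^ 2 + 2) / c ^ 2 := by positivity
  calc (Fmap c v - 1) * ‖v‖ ≤ ((2 * B ^ 2 + 2) / c ^ 2) * B := by
        apply mul_le_mul hkey hv (norm_nonneg v) hnn
    _ = 2 * B * (B ^ 2 + 1) / c ^ 2 := by ring

lemma smul_sub_smul_bound (a b : ℝ) (w z : E) :
    ‖a • w - b • z‖ ≤ |a - b| * ‖w‖ + |b| * ‖w - z‖ := by
  have h : a • w - b • z = (a - b) • w + b • (w - z) := by
    rw [sub_smul, smul_sub]; abel
  rw [h]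
  calc ‖(a - b) • w + b • (w - z)‖ ≤ ‖(a - b) • w‖ + ‖b • (w - z)‖ := norm_add_le _ _
    _ = |a - b| * ‖w‖ + |b| * ‖w - z‖ := by
        rw [norm_smul, norm_smul, Real.norm_eq_abs, Real.norm_eq_abs]

lemma inner_sub_bound (dv du z z' : E) :
    |(inner ℝ dv z : ℝ) - (inner ℝ du z' : ℝ)| ≤ ‖dv - du‖ * ‖z‖ + ‖du‖ * ‖z - z'‖ := by
  have h : (inner ℝ dv z : ℝ) - (inner ℝ du z' : ℝ)
      = (inner ℝ (dv - du) z : ℝ) + (inner ℝ du (z - z') : ℝ) := by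
    rw [inner_sub_left, inner_sub_right]; ring
  rw [h]
  calc |(inner ℝ (dv - du) z : ℝ) + (inner ℝ du (z - z') : ℝ)|
      ≤ |(inner ℝ (dv - du) z : ℝ)| + |(inner ℝ du (z - z') : ℝ)| := abs_add_le _ _
    _ ≤ ‖dv - du‖ * ‖z‖ + ‖du‖ * ‖z - z'‖ :=
        add_le_add (abs_real_inner_le_norm _ _) (abs_real_inner_le_norm _ _)

lemma div_sub_div_bound {X X' r r' δ' MX dX dr : ℝ} (hδ' : 0 < δ')
    (hr : δ' ≤ r) (hr' : δ' ≤ r') (hX' : |X'| ≤ MX)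
    (hdX : |X - X'| ≤ dX) (hdr : |r - r'| ≤ dr) :
    |X / r - X' / r'| ≤ dX / δ' + MX * dr / δ' ^ 2 := by
  have hr0 : 0 < r := lt_of_lt_of_le hδ' hr
  have hr'0 : 0 < r' := lt_of_lt_of_le hδ' hr'
  have key : X / r - X' / r' = (X - X') / r + X' * (r' - r) / (r * r') := by
    field_simp; ring
  rw [key]
  have h1 : |(X - X') / r| ≤ dX / δ' := by
    rw [abs_div, abs_of_pos hr0]
    exact div_le_div₀ (le_trans (abs_nonneg _) hdX) hdX hδ' hr
  have h2 : |X' * (r' - r) / (r * r')| ≤ MX * dr / δ' ^ 2 := by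
    rw [abs_div, abs_mul, abs_of_pos (mul_pos hr0 hr'0)]
    have hnum : |X'| * |r' - r| ≤ MX * dr := by
      apply mul_le_mul hX' (by rwa [abs_sub_comm]) (abs_nonneg _)
        (le_trans (abs_nonneg _) hX')
    have hden : δ' ^ 2 ≤ r * r' := by nlinarith
    exact div_le_div₀ (by nlinarith [abs_nonneg (X' * (r'-r)), le_trans (abs_nonneg X') hX', le_trans (abs_nonneg (r-r')) hdr])
      hnum (by positivity) hden
  calc |(X - X') / r + X' * (r' - r) / (r * r')|
      ≤ |(X - X') / r| + |X' * (r' - r) / (r * r')| := abs_add_le _ _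
    _ ≤ dX / δ' + MX * dr / δ' ^ 2 := add_le_add h1 h2

def Cforce (κ₀ κ₁ κ₂ B δ' Kφ φM Rb : ℝ) : ℝ :=
  κ₀ * (4 * B * Kφ + 2 * φM)
  + (2 * B * ((κ₁ * (4 * B / δ' + 8 * B ^ 2 / δ' ^ 2) + 2 * κ₂) / δ'
        + 2 * (4 * κ₁ * B ^ 2 / δ' + κ₂ * (2 * B + Rb)) / δ' ^ 2)
      + 2 * (4 * κ₁ * B ^ 2 / δ' + κ₂ * (2 * B + Rb)) / δ')

/-- Bound on the difference of one bonding-force summand. -/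
lemma bond_term_bound {κ₁ κ₂ B δ' Rb p q Rij : ℝ}
    (hκ₁ : 0 ≤ κ₁) (hκ₂ : 0 ≤ κ₂) (hB : 1 ≤ B) (hδ' : 0 < δ')
    (hRb : |Rij| ≤ Rb) (hp : 0 ≤ p) (hq : 0 ≤ q)
    (z z' dv du : EuclideanSpace ℝ (Fin d))
    (hz : ‖z‖ ≤ 2 * B) (hz' : ‖z'‖ ≤ 2 * B) (hzδ : δ' ≤ ‖z‖) (hz'δ : δ' ≤ ‖z'‖)
    (hdv : ‖dv‖ ≤ 2 * B) (hdu : ‖du‖ ≤ 2 * B)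
    (hdz : ‖z - z'‖ ≤ 2 * p) (hdvu : ‖dv - du‖ ≤ 2 * q) :
    ‖((κ₁ * ((inner ℝ dv z : ℝ) / ‖z‖) + κ₂ * (‖z‖ - Rij)) / ‖z‖) • z
      - ((κ₁ * ((inner ℝ du z' : ℝ) / ‖z'‖) + κ₂ * (‖z'‖ - Rij)) / ‖z'‖) • z'‖
    ≤ (2 * B * ((κ₁ * (4 * B / δ' + 8 * B ^ 2 / δ' ^ 2) + 2 * κ₂) / δ'
          + 2 * (4 * κ₁ * B ^ 2 / δ' + κ₂ * (2 * B + Rb)) / δ' ^ 2)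
        + 2 * (4 * κ₁ * B ^ 2 / δ' + κ₂ * (2 * B + Rb)) / δ') * (p + q) := by
  have hRb0 : 0 ≤ Rb := le_trans (abs_nonneg _) hRb
  set Amax : ℝ := 4 * κ₁ * B ^ 2 / δ' + κ₂ * (2 * B + Rb) with hAmaxdef
  set Ca : ℝ := κ₁ * (4 * B / δ' + 8 * B ^ 2 / δ' ^ 2) + 2 * κ₂ with hCadef
  set Cs : ℝ := Ca / δ' + 2 * Amax / δ' ^ 2 with hCsdef
  have hB0 : (0:ℝ) < B := by linarith
  have hAmax0 : 0 ≤ Amax := by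
    apply add_nonneg (div_nonneg (by positivity) hδ'.le)
    exact mul_nonneg hκ₂ (by linarith)
  have hCa0 : 0 ≤ Ca := by
    apply add_nonneg (mul_nonneg hκ₁ (by positivity)) (by linarith)
  have hCs0 : 0 ≤ Cs := by
    apply add_nonneg (div_nonneg hCa0 hδ'.le)
    exact div_nonneg (by linarith) (by positivity)
  set a : ℝ := κ₁ * ((inner ℝ dv z : ℝ) / ‖z‖) + κ₂ * (‖z‖ - Rij) with hadef
  set a' : ℝ := κ₁ * ((inner ℝ du z' : ℝ) / ‖z'‖) + κ₂ * (‖z'‖ - Rij) with ha'def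
  have hI : |(inner ℝ dv z : ℝ)| ≤ 4 * B ^ 2 := by
    calc |(inner ℝ dv z : ℝ)| ≤ ‖dv‖ * ‖z‖ := abs_real_inner_le_norm _ _
      _ ≤ (2 * B) * (2 * B) := mul_le_mul hdv hz (norm_nonneg _) (by linarith)
      _ = 4 * B ^ 2 := by ring
  have hI' : |(inner ℝ du z' : ℝ)| ≤ 4 * B ^ 2 := by
    calc |(inner ℝ du z' : ℝ)| ≤ ‖du‖ * ‖z'‖ := abs_real_inner_le_norm _ _
      _ ≤ (2 * B) * (2 * B) := mul_le_mul hdu hz' (norm_nonneg _) (by linarith)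
      _ = 4 * B ^ 2 := by ring
  have hIdiff : |(inner ℝ dv z : ℝ) - (inner ℝ du z' : ℝ)| ≤ 4 * B * p + 4 * B * q := by
    calc |(inner ℝ dv z : ℝ) - (inner ℝ du z' : ℝ)|
        ≤ ‖dv - du‖ * ‖z‖ + ‖du‖ * ‖z - z'‖ := inner_sub_bound _ _ _ _
      _ ≤ (2 * q) * (2 * B) + (2 * B) * (2 * p) :=
          add_le_add (mul_le_mul hdvu hz (norm_nonneg _) (by linarith))
            (mul_le_mul hdu hdz (norm_nonneg _) (by linarith))
      _ = 4 * B * p + 4 * B * q := by ring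
  have hdr : |‖z‖ - ‖z'‖| ≤ 2 * p := le_trans (abs_norm_sub_norm_le z z') hdz
  have hQ : |(inner ℝ dv z : ℝ) / ‖z‖ - (inner ℝ du z' : ℝ) / ‖z'‖|
      ≤ (4 * B * p + 4 * B * q) / δ' + 4 * B ^ 2 * (2 * p) / δ' ^ 2 :=
    div_sub_div_bound hδ' hzδ hz'δ hI' hIdiff hdr
  have hQ' : |(inner ℝ du z' : ℝ) / ‖z'‖| ≤ 4 * B ^ 2 / δ' := by
    rw [abs_div, abs_of_pos (lt_of_lt_of_le hδ' hz'δ)]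
    exact div_le_div₀ (by positivity) hI' hδ' hz'δ
  have ha' : |a'| ≤ Amax := by
    rw [ha'def, hAmaxdef]
    calc |κ₁ * ((inner ℝ du z' : ℝ) / ‖z'‖) + κ₂ * (‖z'‖ - Rij)|
        ≤ |κ₁ * ((inner ℝ du z' : ℝ) / ‖z'‖)| + |κ₂ * (‖z'‖ - Rij)| := abs_add_le _ _
      _ = κ₁ * |(inner ℝ du z' : ℝ) / ‖z'‖| + κ₂ * |‖z'‖ - Rij| := by
          rw [abs_mul, abs_mul, abs_of_nonneg hκ₁, abs_of_nonneg hκ₂]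
      _ ≤ κ₁ * (4 * B ^ 2 / δ') + κ₂ * (2 * B + Rb) := by
          apply add_le_add (mul_le_mul_of_nonneg_left hQ' hκ₁)
          apply mul_le_mul_of_nonneg_left _ hκ₂
          calc |‖z'‖ - Rij| ≤ |‖z'‖| + |Rij| := abs_sub _ _
            _ ≤ 2 * B + Rb := add_le_add (by rwa [abs_of_nonneg (norm_nonneg _)]) hRb
      _ = 4 * κ₁ * B ^ 2 / δ' + κ₂ * (2 * B + Rb) := by ring
  have hadiff : |a - a'| ≤ Ca * (p + q) := by
    have hsplit : a - a' = κ₁ * ((inner ℝ dv z : ℝ) / ‖z‖ - (inner ℝ du z' : ℝ) / ‖z'‖)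
        + κ₂ * (‖z‖ - ‖z'‖) := by rw [hadef, ha'def]; ring
    rw [hsplit]
    calc |κ₁ * ((inner ℝ dv z : ℝ) / ‖z‖ - (inner ℝ du z' : ℝ) / ‖z'‖) + κ₂ * (‖z‖ - ‖z'‖)|
        ≤ κ₁ * |(inner ℝ dv z : ℝ) / ‖z‖ - (inner ℝ du z' : ℝ) / ‖z'‖| + κ₂ * |‖z‖ - ‖z'‖| := by
          refine le_trans (abs_add_le _ _) ?_
          rw [abs_mul, abs_mul, abs_of_nonneg hκ₁, abs_of_nonneg hκ₂]
      _ ≤ κ₁ * ((4 * B * p + 4 * B * q) / δ' + 4 * B ^ 2 * (2 * p) / δ' ^ 2)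
            + κ₂ * (2 * p) :=
          add_le_add (mul_le_mul_of_nonneg_left hQ hκ₁) (mul_le_mul_of_nonneg_left hdr hκ₂)
      _ ≤ Ca * (p + q) := by
          rw [hCadef]
          have hδne : δ' ≠ 0 := hδ'.ne'
          have key : (κ₁ * (4 * B / δ' + 8 * B ^ 2 / δ' ^ 2) + 2 * κ₂) * (p + q)
              - (κ₁ * ((4 * B * p + 4 * B * q) / δ' + 4 * B ^ 2 * (2 * p) / δ' ^ 2)
                + κ₂ * (2 * p))
              = 8 * (κ₁ * q * (B ^ 2 / δ' ^ 2)) + 2 * (κ₂ * q) := by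
            field_simp; ring
          nlinarith [mul_nonneg (mul_nonneg hκ₁ hq)
              (show (0:ℝ) ≤ B ^ 2 / δ' ^ 2 by positivity),
            mul_nonneg hκ₂ hq, key]
  have hsdiff : |a / ‖z‖ - a' / ‖z'‖| ≤ Cs * (p + q) := by
    have := div_sub_div_bound hδ' hzδ hz'δ ha' hadiff hdr
    calc |a / ‖z‖ - a' / ‖z'‖| ≤ Ca * (p + q) / δ' + Amax * (2 * p) / δ' ^ 2 := this
      _ ≤ Cs * (p + q) := by
          rw [hCsdef]
          have hδne : δ' ≠ 0 := hδ'.ne'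
          have key : (Ca / δ' + 2 * Amax / δ' ^ 2) * (p + q)
              - (Ca * (p + q) / δ' + Amax * (2 * p) / δ' ^ 2)
              = 2 * (Amax * q / δ' ^ 2) := by field_simp; ring
          nlinarith [mul_nonneg hAmax0 hq,
            show (0:ℝ) ≤ Amax * q / δ' ^ 2 from div_nonneg (mul_nonneg hAmax0 hq) (by positivity),
            key]
  have hs' : |a' / ‖z'‖| ≤ Amax / δ' := by
    rw [abs_div, abs_of_pos (lt_of_lt_of_le hδ' hz'δ)]
    exact div_le_div₀ hAmax0 ha' hδ' hz'δ
  calc ‖(a / ‖z‖) • z - (a' / ‖z'‖) • z'‖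
      ≤ |a / ‖z‖ - a' / ‖z'‖| * ‖z‖ + |a' / ‖z'‖| * ‖z - z'‖ := smul_sub_smul_bound _ _ _ _
    _ ≤ (Cs * (p + q)) * (2 * B) + (Amax / δ') * (2 * p) :=
        add_le_add (mul_le_mul hsdiff hz (norm_nonneg _) (by positivity))
          (mul_le_mul hs' hdz (norm_nonneg _) (div_nonneg hAmax0 hδ'.le))
    _ = (2 * B * Cs) * (p + q) + (2 * Amax / δ') * p := by ring
    _ ≤ (2 * B * Cs) * (p + q) + (2 * Amax / δ') * (p + q) := by
        refine add_le_add le_rfl (mul_le_mul_of_nonneg_left (by linarith) ?_)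
        exact div_nonneg (by linarith) hδ'.le
    _ = (2 * B * Cs + 2 * Amax / δ') * (p + q) := by ring

lemma Cforce_nonneg {κ₀ κ₁ κ₂ B δ' Kφ φM Rb : ℝ}
    (hκ₀ : 0 ≤ κ₀) (hκ₁ : 0 ≤ κ₁) (hκ₂ : 0 ≤ κ₂) (hB : 1 ≤ B) (hδ' : 0 < δ')
    (hKφ : 0 ≤ Kφ) (hφM : 0 ≤ φM) (hRb : 0 ≤ Rb) :
    0 ≤ Cforce κ₀ κ₁ κ₂ B δ' Kφ φM Rb := by
  have hB0 : (0:ℝ) < B := by linarith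
  have h1 : (0:ℝ) ≤ 4 * κ₁ * B ^ 2 / δ' + κ₂ * (2 * B + Rb) :=
    add_nonneg (div_nonneg (by positivity) hδ'.le) (mul_nonneg hκ₂ (by linarith))
  have h2 : (0:ℝ) ≤ κ₁ * (4 * B / δ' + 8 * B ^ 2 / δ' ^ 2) + 2 * κ₂ :=
    add_nonneg (mul_nonneg hκ₁ (by positivity)) (by linarith)
  have h3 : (0:ℝ) ≤ (κ₁ * (4 * B / δ' + 8 * B ^ 2 / δ' ^ 2) + 2 * κ₂) / δ'
      + 2 * (4 * κ₁ * B ^ 2 / δ' + κ₂ * (2 * B + Rb)) / δ' ^ 2 :=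
    add_nonneg (div_nonneg h2 hδ'.le) (div_nonneg (by linarith) (by positivity))
  apply add_nonneg (mul_nonneg hκ₀ (by positivity))
  exact add_nonneg (mul_nonneg (by linarith) h3) (div_nonneg (by linarith) hδ'.le)

lemma force_diff_bound (hN : 0 < N) {κ₀ κ₁ κ₂ : ℝ}
    (hκ₀ : 0 ≤ κ₀) (hκ₁ : 0 ≤ κ₁) (hκ₂ : 0 ≤ κ₂)
    (φ : ℝ → ℝ) (R : Fin N → Fin N → ℝ)
    {B δ' Kφ φM Rb p q : ℝ}
    (hB : 1 ≤ B) (hδ' : 0 < δ') (hKφ : 0 ≤ Kφ) (hφM : 0 ≤ φM)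
    (hφ0 : ∀ r, 0 ≤ φ r) (hφMb : ∀ r, φ r ≤ φM)
    (hφL : ∀ a ∈ Icc (0:ℝ) (2*B), ∀ b ∈ Icc (0:ℝ) (2*B), |φ a - φ b| ≤ Kφ * |a - b|)
    (hRB : ∀ i j, |R i j| ≤ Rb)
    (hp : 0 ≤ p) (hq : 0 ≤ q)
    (x y v u : Fin N → EuclideanSpace ℝ (Fin d))
    (hx : ∀ k, ‖x k‖ ≤ B) (hy : ∀ k, ‖y k‖ ≤ B)
    (hxs : ∀ k l, k ≠ l → δ' ≤ ‖x k - x l‖) (hys : ∀ k l, k ≠ l → δ' ≤ ‖y k - y l‖)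
    (hv : ∀ k, ‖v k‖ ≤ B) (hu : ∀ k, ‖u k‖ ≤ B)
    (hxy : ∀ k, ‖x k - y k‖ ≤ p) (hvu : ∀ k, ‖v k - u k‖ ≤ q) (i : Fin N) :
    ‖rcsForce N κ₀ κ₁ κ₂ φ R x v i - rcsForce N κ₀ κ₁ κ₂ φ R y u i‖
      ≤ Cforce κ₀ κ₁ κ₂ B δ' Kφ φM Rb * (p + q) := by
  have hRb0 : 0 ≤ Rb := le_trans (abs_nonneg _) (hRB i i)
  have hNR : (0:ℝ) < (N:ℝ) := by exact_mod_cast hN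
  set Ct : ℝ := 2 * B * ((κ₁ * (4 * B / δ' + 8 * B ^ 2 / δ' ^ 2) + 2 * κ₂) / δ'
        + 2 * (4 * κ₁ * B ^ 2 / δ' + κ₂ * (2 * B + Rb)) / δ' ^ 2)
      + 2 * (4 * κ₁ * B ^ 2 / δ' + κ₂ * (2 * B + Rb)) / δ' with hCt
  -- first sum
  have hsum1 : ‖(∑ j, φ ‖x i - x j‖ • (v j - v i)) - ∑ j, φ ‖y i - y j‖ • (u j - u i)‖
      ≤ (N : ℝ) * ((Kφ * (2 * p)) * (2 * B) + φM * (2 * q)) := by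
    rw [← Finset.sum_sub_distrib]
    have hterm : ∀ j : Fin N,
        ‖φ ‖x i - x j‖ • (v j - v i) - φ ‖y i - y j‖ • (u j - u i)‖
          ≤ (Kφ * (2 * p)) * (2 * B) + φM * (2 * q) := by
      intro j
      have hmema : ‖x i - x j‖ ∈ Icc (0:ℝ) (2*B) :=
        ⟨norm_nonneg _, le_trans (norm_sub_le _ _) (by linarith [hx i, hx j])⟩
      have hmemb : ‖y i - y j‖ ∈ Icc (0:ℝ) (2*B) :=
        ⟨norm_nonneg _, le_trans (norm_sub_le _ _) (by linarith [hy i, hy j])⟩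
      have hab : |‖x i - x j‖ - ‖y i - y j‖| ≤ 2 * p := by
        refine le_trans (abs_norm_sub_norm_le _ _) ?_
        have he : (x i - x j) - (y i - y j) = (x i - y i) - (x j - y j) := by abel
        rw [he]
        exact le_trans (norm_sub_le _ _) (by linarith [hxy i, hxy j])
      have hφd : |φ ‖x i - x j‖ - φ ‖y i - y j‖| ≤ Kφ * (2 * p) :=
        le_trans (hφL _ hmema _ hmemb) (mul_le_mul_of_nonneg_left hab hKφ)
      have hdvu2 : ‖(v j - v i) - (u j - u i)‖ ≤ 2 * q := by
        have he : (v j - v i) - (u j - u i) = (v j - u j) - (v i - u i) := by abel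
        rw [he]
        exact le_trans (norm_sub_le _ _) (by linarith [hvu i, hvu j])
      have hvv : ‖v j - v i‖ ≤ 2 * B :=
        le_trans (norm_sub_le _ _) (by linarith [hv i, hv j])
      refine le_trans (smul_sub_smul_bound _ _ _ _) ?_
      have hφb : |φ ‖y i - y j‖| ≤ φM := by
        rw [abs_of_nonneg (hφ0 _)]; exact hφMb _
      exact add_le_add
        (mul_le_mul hφd hvv (norm_nonneg _) (by positivity))
        (mul_le_mul hφb hdvu2 (norm_nonneg _) hφM)
    refine le_trans (norm_sum_le_of_le _ (fun j _ => hterm j)) ?_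
    rw [Finset.sum_const, Finset.card_univ, Fintype.card_fin, nsmul_eq_mul]
  -- second sum
  have hsum2 : ‖(∑ j ∈ Finset.univ.filter (fun j => j ≠ i),
        ((κ₁ * ((inner ℝ (v j - v i) (x j - x i) : ℝ) / ‖x j - x i‖)
            + κ₂ * (‖x i - x j‖ - R i j)) / ‖x j - x i‖) • (x j - x i))
      - ∑ j ∈ Finset.univ.filter (fun j => j ≠ i),
        ((κ₁ * ((inner ℝ (u j - u i) (y j - y i) : ℝ) / ‖y j - y i‖)
            + κ₂ * (‖y i - y j‖ - R i j)) / ‖y j - y i‖) • (y j - y i)‖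
      ≤ (N : ℝ) * (Ct * (p + q)) := by
    rw [← Finset.sum_sub_distrib]
    have hterm : ∀ j ∈ Finset.univ.filter (fun j => j ≠ i),
        ‖((κ₁ * ((inner ℝ (v j - v i) (x j - x i) : ℝ) / ‖x j - x i‖)
            + κ₂ * (‖x i - x j‖ - R i j)) / ‖x j - x i‖) • (x j - x i)
          - ((κ₁ * ((inner ℝ (u j - u i) (y j - y i) : ℝ) / ‖y j - y i‖)
            + κ₂ * (‖y i - y j‖ - R i j)) / ‖y j - y i‖) • (y j - y i)‖
          ≤ Ct * (p + q) := by
      intro j hj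
      have hji : j ≠ i := by simpa using hj
      rw [norm_sub_rev (x i) (x j), norm_sub_rev (y i) (y j), hCt]
      apply bond_term_bound hκ₁ hκ₂ hB hδ' (hRB i j) hp hq
      · exact le_trans (norm_sub_le _ _) (by linarith [hx i, hx j])
      · exact le_trans (norm_sub_le _ _) (by linarith [hy i, hy j])
      · exact hxs j i hji
      · exact hys j i hji
      · exact le_trans (norm_sub_le _ _) (by linarith [hv i, hv j])
      · exact le_trans (norm_sub_le _ _) (by linarith [hu i, hu j])
      · have he : (x j - x i) - (y j - y i) = (x j - y j) - (x i - y i) := by abel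
        rw [he]; exact le_trans (norm_sub_le _ _) (by linarith [hxy i, hxy j])
      · have he : (v j - v i) - (u j - u i) = (v j - u j) - (v i - u i) := by abel
        rw [he]; exact le_trans (norm_sub_le _ _) (by linarith [hvu i, hvu j])
    refine le_trans (norm_sum_le_of_le _ hterm) ?_
    rw [Finset.sum_const, nsmul_eq_mul]
    have hCt0 : 0 ≤ Ct * (p + q) := by
      rw [hCt]
      apply mul_nonneg _ (by linarith)
      have := Cforce_nonneg (le_refl 0) hκ₁ hκ₂ hB hδ' hKφ hφM hRb0 (κ₀ := 0) (Kφ := Kφ) (φM := φM)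
      · rw [Cforce] at this; simpa using this
    apply mul_le_mul_of_nonneg_right _ hCt0
    calc ((Finset.univ.filter (fun j => j ≠ i)).card : ℝ)
        ≤ ((Finset.univ : Finset (Fin N)).card : ℝ) := by
          exact_mod_cast Finset.card_filter_le _ _
      _ = (N : ℝ) := by rw [Finset.card_univ, Fintype.card_fin]
  -- combine
  set T1 : ℝ := (Kφ * (2 * p)) * (2 * B) + φM * (2 * q) with hT1def
  set S1 := (∑ j, φ ‖x i - x j‖ • (v j - v i)) - ∑ j, φ ‖y i - y j‖ • (u j - u i) with hS1
  set S2 := (∑ j ∈ Finset.univ.filter (fun j => j ≠ i),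
        ((κ₁ * ((inner ℝ (v j - v i) (x j - x i) : ℝ) / ‖x j - x i‖)
            + κ₂ * (‖x i - x j‖ - R i j)) / ‖x j - x i‖) • (x j - x i))
      - ∑ j ∈ Finset.univ.filter (fun j => j ≠ i),
        ((κ₁ * ((inner ℝ (u j - u i) (y j - y i) : ℝ) / ‖y j - y i‖)
            + κ₂ * (‖y i - y j‖ - R i j)) / ‖y j - y i‖) • (y j - y i) with hS2
  have hsplit : rcsForce N κ₀ κ₁ κ₂ φ R x v i - rcsForce N κ₀ κ₁ κ₂ φ R y u i
      = (κ₀ / (N : ℝ)) • S1 + (1 / (2 * (N : ℝ))) • S2 := by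
    rw [hS1, hS2, rcsForce, rcsForce, smul_sub, smul_sub]; abel
  have hCtnn : 0 ≤ Ct := by
    have := Cforce_nonneg (le_refl (0:ℝ)) hκ₁ hκ₂ hB hδ' hKφ hφM hRb0
    rw [Cforce] at this
    rw [hCt]; simpa using this
  rw [hsplit]
  refine le_trans (norm_add_le _ _) ?_
  rw [norm_smul, norm_smul, Real.norm_eq_abs, Real.norm_eq_abs,
    abs_of_nonneg (by positivity : (0:ℝ) ≤ κ₀ / (N:ℝ)),
    abs_of_nonneg (by positivity : (0:ℝ) ≤ 1 / (2 * (N:ℝ)))]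
  have e1 : κ₀ / (N:ℝ) * ((N:ℝ) * T1) = κ₀ * T1 := by field_simp
  have e2 : 1 / (2 * (N:ℝ)) * ((N:ℝ) * (Ct * (p + q))) = (Ct * (p + q)) / 2 := by
    field_simp
  have g1 : κ₀ / (N:ℝ) * ‖S1‖ ≤ κ₀ * T1 := by
    rw [← e1]
    exact mul_le_mul_of_nonneg_left hsum1 (by positivity)
  have g2 : 1 / (2 * (N:ℝ)) * ‖S2‖ ≤ (Ct * (p + q)) / 2 := by
    rw [← e2]
    exact mul_le_mul_of_nonneg_left hsum2 (by positivity)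
  have hC : Cforce κ₀ κ₁ κ₂ B δ' Kφ φM Rb = κ₀ * (4 * B * Kφ + 2 * φM) + Ct := by
    rw [hCt, Cforce]
  have hfin : κ₀ * T1 + (Ct * (p + q)) / 2
      ≤ (κ₀ * (4 * B * Kφ + 2 * φM) + Ct) * (p + q) := by
    have key : (κ₀ * (4 * B * Kφ + 2 * φM) + Ct) * (p + q) - (κ₀ * T1 + (Ct * (p + q)) / 2)
        = 4 * ((κ₀ * Kφ) * (B * q)) + 2 * ((κ₀ * φM) * p) + (Ct * (p + q)) / 2 := by
      rw [hT1def]; ring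
    have n1 : 0 ≤ (κ₀ * Kφ) * (B * q) :=
      mul_nonneg (mul_nonneg hκ₀ hKφ) (mul_nonneg (by linarith) hq)
    have n2 : 0 ≤ (κ₀ * φM) * p := mul_nonneg (mul_nonneg hκ₀ hφM) hp
    have n3 : 0 ≤ Ct * (p + q) := mul_nonneg hCtnn (by linarith)
    clear_value Ct T1 S1 S2
    linarith
  rw [hC]
  linarith

/-- Core Grönwall-bootstrap estimate for a single `c'`. -/
lemma main_perc (d N : ℕ) (hN : 0 < N)
    {κ₀ κ₁ κ₂ : ℝ} (hκ₀ : 0 ≤ κ₀) (hκ₁ : 0 ≤ κ₁) (hκ₂ : 0 ≤ κ₂)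
    (φ : ℝ → ℝ) (R : Fin N → Fin N → ℝ)
    {B δ ρ δ' Mx Mw Kφ φM Rb T c' : ℝ}
    (hδpos : 0 < δ) (hρ : ρ = δ / 4) (hδ'e : δ' = δ / 2)
    (hB1 : 1 ≤ B) (hMx0 : 0 ≤ Mx) (hMw0 : 0 ≤ Mw)
    (hMxB : Mx + ρ ≤ B) (hMwB : Mw + ρ ≤ B) (hT : 0 < T)
    (hKφ0 : 0 ≤ Kφ) (hφM0 : 0 ≤ φM) (hRb0 : 0 ≤ Rb)
    (hφ0 : ∀ r, 0 ≤ φ r) (hφMb : ∀ r, φ r ≤ φM)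
    (hφL : ∀ a ∈ Icc (0:ℝ) (2*B), ∀ b ∈ Icc (0:ℝ) (2*B), |φ a - φ b| ≤ Kφ * |a - b|)
    (hRB : ∀ i j, |R i j| ≤ Rb)
    (x v xI wI : Fin N → ℝ → EuclideanSpace ℝ (Fin d))
    (hRsol : IsRCSSol N c' κ₀ κ₁ κ₂ φ R ⊤ x v)
    (hIsol : IsCSSol N κ₀ κ₁ κ₂ φ R ⊤ xI wI)
    (hinit : ∀ i, x i 0 = xI i 0 ∧ what c' (v i 0) = wI i 0)
    (hMx : ∀ i, ∀ t ∈ Icc (0:ℝ) T, ‖xI i t‖ ≤ Mx)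
    (hMw : ∀ i, ∀ t ∈ Icc (0:ℝ) T, ‖wI i t‖ ≤ Mw)
    (hsepI : ∀ i j, i ≠ j → ∀ t ∈ Icc (0:ℝ) T, δ ≤ ‖xI i t - xI j t‖)
    (hc2B : 2 * B + 1 ≤ c')
    (hA : (Cforce κ₀ κ₁ κ₂ B δ' Kφ φM Rb + 1) * (2 * B * (B ^ 2 + 1))
        * Real.exp ((2 * Cforce κ₀ κ₁ κ₂ B δ' Kφ φM Rb + 1) * T)
        / (2 * Cforce κ₀ κ₁ κ₂ B δ' Kφ φM Rb + 1) / c' ^ 2 ≤ ρ / 2) :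
    ∀ t ∈ Icc (0:ℝ) T,
      ‖(( fun s => ((fun i => x i s - xI i s, fun i => what c' (v i s) - wI i s)
          : (Fin N → EuclideanSpace ℝ (Fin d)) × (Fin N → EuclideanSpace ℝ (Fin d)))) t)‖
        ≤ (Cforce κ₀ κ₁ κ₂ B δ' Kφ φM Rb + 1) * (2 * B * (B ^ 2 + 1))
            * Real.exp ((2 * Cforce κ₀ κ₁ κ₂ B δ' Kφ φM Rb + 1) * T)
            / (2 * Cforce κ₀ κ₁ κ₂ B δ' Kφ φM Rb + 1) / c' ^ 2 := by
  set Kf : ℝ := Cforce κ₀ κ₁ κ₂ B δ' Kφ φM Rb with hKf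
  have hδ'pos : 0 < δ' := by rw [hδ'e]; linarith
  have hρpos : 0 < ρ := by rw [hρ]; linarith
  have hKf0 : 0 ≤ Kf := Cforce_nonneg hκ₀ hκ₁ hκ₂ hB1 hδ'pos hKφ0 hφM0 hRb0
  set K : ℝ := 2 * Kf + 1 with hK
  have hKpos : 0 < K := by rw [hK]; linarith
  set η : ℝ := 2 * B * (B ^ 2 + 1) / c' ^ 2 with hη
  have hc'pos : (0:ℝ) < c' := by linarith
  have hηnn : 0 ≤ η := by rw [hη]; positivity
  set εe : ℝ := (Kf + 1) * η with hεe
  have hεenn : 0 ≤ εe := by rw [hεe]; positivity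
  set Ab : ℝ := (Kf + 1) * (2 * B * (B ^ 2 + 1)) * Real.exp (K * T) / K / c' ^ 2 with hAb
  have hAbnn : 0 ≤ Ab := by rw [hAb]; positivity
  set h : ℝ → (Fin N → EuclideanSpace ℝ (Fin d)) × (Fin N → EuclideanSpace ℝ (Fin d)) :=
    fun s => (fun i => x i s - xI i s, fun i => what c' (v i s) - wI i s) with hh
  set h' : ℝ → (Fin N → EuclideanSpace ℝ (Fin d)) × (Fin N → EuclideanSpace ℝ (Fin d)) :=
    fun s => (fun i => v i s - wI i s,
      fun i => rcsForce N κ₀ κ₁ κ₂ φ R (fun k => x k s) (fun k => v k s) i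
        - rcsForce N κ₀ κ₁ κ₂ φ R (fun k => xI k s) (fun k => wI k s) i) with hh'
  have hdomtop : ∀ s : ℝ, 0 ≤ s → s ∈ dom ⊤ := fun s hs => ⟨hs, ENNReal.ofReal_lt_top⟩
  have hderiv : ∀ s : ℝ, 0 ≤ s → HasDerivAt h (h' s) s := by
    intro s hs
    obtain ⟨hsp, hcol, hxd, hwd⟩ := hRsol s (hdomtop s hs)
    obtain ⟨hcolI, hxdI, hwdI⟩ := hIsol s (hdomtop s hs)
    apply HasDerivAt.prodMk
    · exact hasDerivAt_pi.2 fun i => (hxd i).sub (hxdI i)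
    · exact hasDerivAt_pi.2 fun i => (hwd i).sub (hwdI i)
  have hcontAt : ∀ s : ℝ, 0 ≤ s → ContinuousAt h s := fun s hs => (hderiv s hs).continuousAt
  have h0 : h 0 = 0 := by
    rw [hh]
    ext i k
    · simp [(hinit i).1]
    · simp [(hinit i).2]
  -- the key differential inequality, valid while in the tube
  have hbound : ∀ s : ℝ, 0 ≤ s → s ≤ T → ‖h s‖ ≤ ρ → ‖h' s‖ ≤ K * ‖h s‖ + εe := by
    intro s hs0 hsT htube
    have hsIcc : s ∈ Icc (0:ℝ) T := ⟨hs0, hsT⟩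
    obtain ⟨hsp, hcol, hxd, hwd⟩ := hRsol s (hdomtop s hs0)
    have hx1 : ∀ i, ‖x i s - xI i s‖ ≤ ‖h s‖ := fun i =>
      le_trans (norm_le_pi_norm (fun j => x j s - xI j s) i) (norm_fst_le (h s))
    have hw1 : ∀ i, ‖what c' (v i s) - wI i s‖ ≤ ‖h s‖ := fun i =>
      le_trans (norm_le_pi_norm (fun j => what c' (v j s) - wI j s) i) (norm_snd_le (h s))
    have hXb : ∀ i, ‖x i s‖ ≤ B := by
      intro i
      calc ‖x i s‖ ≤ ‖x i s - xI i s‖ + ‖xI i s‖ := by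
            simpa using norm_add_le (x i s - xI i s) (xI i s)
        _ ≤ ρ + Mx := add_le_add (le_trans (hx1 i) htube) (hMx i s hsIcc)
        _ ≤ B := by linarith
    have hWhatb : ∀ i, ‖what c' (v i s)‖ ≤ B := by
      intro i
      calc ‖what c' (v i s)‖ ≤ ‖what c' (v i s) - wI i s‖ + ‖wI i s‖ := by
            simpa using norm_add_le (what c' (v i s) - wI i s) (wI i s)
        _ ≤ ρ + Mw := add_le_add (le_trans (hw1 i) htube) (hMw i s hsIcc)
        _ ≤ B := by linarith
    have hVb : ∀ i, ‖v i s‖ ≤ B := fun i =>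
      le_trans (norm_le_norm_what hc'pos _ (hsp i)) (hWhatb i)
    have hsep : ∀ k l, k ≠ l → δ' ≤ ‖x k s - x l s‖ := by
      intro k l hkl
      have h1 : ‖xI k s - xI l s‖ ≤ ‖x k s - x l s‖ + 2 * ρ := by
        have he : xI k s - xI l s = (xI k s - x k s) + (x k s - x l s) + (x l s - xI l s) := by
          abel
        rw [he]
        have := norm_add₃_le (a := xI k s - x k s) (b := x k s - x l s) (c := x l s - xI l s)
        have e1 : ‖xI k s - x k s‖ ≤ ρ := by
          rw [norm_sub_rev]; exact le_trans (hx1 k) htube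
        have e2 : ‖x l s - xI l s‖ ≤ ρ := le_trans (hx1 l) htube
        linarith
      have := hsepI k l hkl s hsIcc
      rw [hδ'e]; rw [hρ] at h1; linarith
    have hsepI' : ∀ k l, k ≠ l → δ' ≤ ‖xI k s - xI l s‖ := by
      intro k l hkl
      have := hsepI k l hkl s hsIcc
      rw [hδ'e]; linarith
    have hMwB' : ∀ i, ‖wI i s‖ ≤ B := fun i => le_trans (hMw i s hsIcc) (by linarith)
    have hMxB' : ∀ i, ‖xI i s‖ ≤ B := fun i => le_trans (hMx i s hsIcc) (by linarith)
    have hηi : ∀ i, ‖v i s - what c' (v i s)‖ ≤ η := by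
      intro i
      rw [norm_sub_rev, hη]
      exact what_sub_bound hB1 hc2B _ (hVb i)
    have hqb : ∀ i, ‖v i s - wI i s‖ ≤ η + ‖h s‖ := by
      intro i
      calc ‖v i s - wI i s‖
          ≤ ‖v i s - what c' (v i s)‖ + ‖what c' (v i s) - wI i s‖ := by
            have he : v i s - wI i s
                = (v i s - what c' (v i s)) + (what c' (v i s) - wI i s) := by abel
            rw [he]; exact norm_add_le _ _
        _ ≤ η + ‖h s‖ := add_le_add (hηi i) (hw1 i)
    have hforce : ∀ i,
        ‖rcsForce N κ₀ κ₁ κ₂ φ R (fun k => x k s) (fun k => v k s) i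
          - rcsForce N κ₀ κ₁ κ₂ φ R (fun k => xI k s) (fun k => wI k s) i‖
          ≤ Kf * (‖h s‖ + (η + ‖h s‖)) := by
      intro i
      rw [hKf]
      exact force_diff_bound hN hκ₀ hκ₁ hκ₂ φ R hB1 hδ'pos hKφ0 hφM0 hφ0 hφMb hφL hRB
        (norm_nonneg _) (by positivity)
        _ _ _ _ hXb hMxB' hsep hsepI' hVb hMwB' hx1 hqb i
    have hRHSnn : 0 ≤ K * ‖h s‖ + εe := by positivity
    rw [hh', Prod.norm_def]
    apply max_le
    · rw [pi_norm_le_iff_of_nonneg hRHSnn]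
      intro i
      calc ‖v i s - wI i s‖ ≤ η + ‖h s‖ := hqb i
        _ ≤ K * ‖h s‖ + εe := by
          rw [hK, hεe]
          nlinarith [norm_nonneg (h s), mul_nonneg hKf0 (norm_nonneg (h s)),
            mul_nonneg hKf0 hηnn]
    · rw [pi_norm_le_iff_of_nonneg hRHSnn]
      intro i
      calc ‖rcsForce N κ₀ κ₁ κ₂ φ R (fun k => x k s) (fun k => v k s) i
          - rcsForce N κ₀ κ₁ κ₂ φ R (fun k => xI k s) (fun k => wI k s) i‖
          ≤ Kf * (‖h s‖ + (η + ‖h s‖)) := hforce i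
        _ ≤ K * ‖h s‖ + εe := by
          rw [hK, hεe]
          nlinarith [norm_nonneg (h s), mul_nonneg hKf0 hηnn]
  -- Good set and its supremum
  set G : Set ℝ := {t | t ∈ Icc (0:ℝ) T ∧ ∀ s ∈ Icc (0:ℝ) t, ‖h s‖ ≤ ρ} with hG
  have h0G : (0:ℝ) ∈ G := by
    refine ⟨⟨le_refl 0, hT.le⟩, ?_⟩
    intro s hs
    have hs0 : s = 0 := le_antisymm hs.2 hs.1
    rw [hs0, h0]; simpa using hρpos.le
  have hGbdd : BddAbove G := ⟨T, fun t ht => ht.1.2⟩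
  have hGne : G.Nonempty := ⟨0, h0G⟩
  set m : ℝ := sSup G with hm
  have hm0 : 0 ≤ m := le_csSup hGbdd h0G
  have hmT : m ≤ T := csSup_le hGne (fun t ht => ht.1.2)
  have htube : ∀ s ∈ Icc (0:ℝ) m, ‖h s‖ ≤ ρ := by
    have hlt_case : ∀ u : ℝ, 0 ≤ u → u < m → ‖h u‖ ≤ ρ := by
      intro u hu0 hum
      have hlt' : u < sSup G := by rw [← hm]; exact hum
      obtain ⟨t', ht'G, hut'⟩ := exists_lt_of_lt_csSup hGne hlt'
      exact ht'G.2 u ⟨hu0, hut'.le⟩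
    intro s hs
    rcases lt_or_eq_of_le hs.2 with hsm | hsm
    · exact hlt_case s hs.1 hsm
    · 
      rcases eq_or_lt_of_le hs.1 with h0s | h0s
      · rw [← h0s, h0]; simpa using hρpos.le
      · have hC : IsClosed (Ici (0:ℝ) ∩ (fun u => ‖h u‖) ⁻¹' (Iic ρ)) := by
          apply ContinuousOn.preimage_isClosed_of_isClosed _ isClosed_Ici isClosed_Iic
          intro u hu
          exact ((hcontAt u hu).norm).continuousWithinAt
        have hsub : Ico (0:ℝ) s ⊆ (Ici 0 ∩ (fun u => ‖h u‖) ⁻¹' (Iic ρ)) := by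
          intro u hu
          exact ⟨hu.1, hlt_case u hu.1 (hsm ▸ hu.2)⟩
        have hmem : s ∈ closure (Ico (0:ℝ) s) := by
          rw [closure_Ico (ne_of_lt h0s)]; exact ⟨hs.1, le_refl s⟩
        exact ((hC.closure_subset_iff.2 hsub) hmem).2
  -- Grönwall on [0, m]
  have hgron : ∀ t ∈ Icc (0:ℝ) m, ‖h t‖ ≤ gronwallBound 0 K εe (t - 0) := by
    apply norm_le_gronwallBound_of_norm_deriv_right_le
    · intro u hu; exact (hcontAt u hu.1).continuousWithinAt
    · intro u hu; exact (hderiv u hu.1).hasDerivWithinAt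
    · rw [h0]; simp
    · intro u hu
      exact hbound u hu.1 (le_trans hu.2.le hmT) (htube u ⟨hu.1, hu.2.le⟩)
  have hgb : ∀ t ∈ Icc (0:ℝ) m, ‖h t‖ ≤ Ab := by
    intro t ht
    refine le_trans (hgron t ht) ?_
    rw [gronwallBound_of_K_ne_0 hKpos.ne', hAb]
    have hKT : K * (t - 0) ≤ K * T :=
      mul_le_mul_of_nonneg_left (by linarith [ht.2, hmT]) hKpos.le
    have hexp : Real.exp (K * (t - 0)) - 1 ≤ Real.exp (K * T) := by
      have := Real.exp_le_exp.2 hKT; linarith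
    calc (0:ℝ) * Real.exp (K * (t - 0)) + εe / K * (Real.exp (K * (t - 0)) - 1)
        = εe / K * (Real.exp (K * (t - 0)) - 1) := by ring
      _ ≤ εe / K * Real.exp (K * T) :=
          mul_le_mul_of_nonneg_left hexp (div_nonneg hεenn hKpos.le)
      _ = (Kf + 1) * (2 * B * (B ^ 2 + 1)) * Real.exp (K * T) / K / c' ^ 2 := by
          rw [hεe, hη]; field_simp
  have hA' : Ab ≤ ρ / 2 := by rw [hAb]; exact hA
  -- m = T
  have hmeq : m = T := by
    by_contra hne
    have hmlt : m < T := lt_of_le_of_ne hmT hne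
    have hhm : ‖h m‖ < ρ :=
      lt_of_le_of_lt (hgb m ⟨hm0, le_refl m⟩) (by linarith)
    have hev : ∀ᶠ u in 𝓝 m, ‖h u‖ < ρ :=
      Filter.Tendsto.eventually_lt_const hhm ((hcontAt m hm0).norm)
    obtain ⟨r, hr, hball⟩ := Metric.eventually_nhds_iff.1 hev
    set m' : ℝ := min T (m + r / 2) with hm'
    have hm'G : m' ∈ G := by
      refine ⟨⟨le_trans hm0 ?_, min_le_left _ _⟩, ?_⟩
      · exact le_min (by linarith) (by linarith)
      · intro s hs
        rcases le_or_gt s m with hsm | hsm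
        · exact htube s ⟨hs.1, hsm⟩
        · refine (hball ?_).le
          have hs2 : s ≤ m + r / 2 := le_trans hs.2 (min_le_right _ _)
          rw [Real.dist_eq, abs_of_pos (by linarith : (0:ℝ) < s - m)]
          linarith
    have h1 : m' ≤ m := by rw [hm]; exact le_csSup hGbdd hm'G
    have h2 : m < m' := lt_min hmlt (by linarith)
    linarith
  intro t ht
  rw [← hmeq] at ht
  simpa using hgb t ht

end AuxNRL

set_option maxHeartbeats 1000000 in
/-- Finite-in-time nonrelativistic limit: for global solutions of the RCS model for each
speed of light `c' ∈ [c,∞)` and a global solution of the classical CS model with the same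
initial data, `lim_{c'→∞} sup_{0≤t≤T} ∑_i (|x_i^{c'} − x_i^∞|² + |w_i^{c'} − w_i^∞|²) = 0`
for every `T ∈ (0,∞)`. -/
theorem nonrelativistic_limit
    (d N : ℕ) (hd : 1 ≤ d) (hN : 2 ≤ N)
    (c κ₀ κ₁ κ₂ : ℝ) (hc : 0 < c) (hκ₀ : 0 ≤ κ₀) (hκ₁ : 0 ≤ κ₁) (hκ₂ : 0 < κ₂)
    (φ : ℝ → ℝ) (φM : ℝ) (hφ : LocallyLipschitz φ)
    (hφ0 : ∀ r, 0 ≤ φ r) (hφM : ∀ r, φ r ≤ φM)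
    (R : Fin N → Fin N → ℝ) (hR0 : ∀ i, R i i = 0)
    (hRsym : ∀ i j, R i j = R j i) (hRnn : ∀ i j, 0 ≤ R i j)
    (hRpos : ∀ i j, i ≠ j → 0 < R i j)
    (Rmin : ℝ)
    (hRmin : IsLeast {r : ℝ | ∃ i j : Fin N, i ≠ j ∧ r = R i j} Rmin)
    (x0 w0 : Fin N → EuclideanSpace ℝ (Fin d))
    (hx0 : ∀ i j : Fin N, i ≠ j → x0 i ≠ x0 j)
    (hw0 : ∀ i, ‖w0 i‖ < c)
    (hE : kinETilde c w0 + potE κ₂ R x0 < N + κ₂ / (4 * N) * Rmin ^ 2)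
    (X V : ℝ → Fin N → ℝ → EuclideanSpace ℝ (Fin d))
    (hsol : ∀ c' : ℝ, c ≤ c' →
      IsRCSSol N c' κ₀ κ₁ κ₂ φ R ⊤ (X c') (V c') ∧
      ∀ i, X c' i 0 = x0 i ∧ what c' (V c' i 0) = w0 i)
    (xI wI : Fin N → ℝ → EuclideanSpace ℝ (Fin d))
    (hsolI : IsCSSol N κ₀ κ₁ κ₂ φ R ⊤ xI wI ∧ ∀ i, xI i 0 = x0 i ∧ wI i 0 = w0 i) :
    ∀ T : ℝ, 0 < T → ∀ ε : ℝ, 0 < ε →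
      ∀ᶠ c' : ℝ in Filter.atTop, ∀ t ∈ Set.Icc (0:ℝ) T,
        ∑ i, (‖X c' i t - xI i t‖ ^ 2 + ‖what c' (V c' i t) - wI i t‖ ^ 2) < ε := by
  clear hE hRmin Rmin hx0 hw0 hRpos hRsym hR0 hd
  intro T hT ε hε
  have hNpos : 0 < N := by omega
  haveI : Nonempty (Fin N) := ⟨⟨0, hNpos⟩⟩
  obtain ⟨hIsol, hIinit⟩ := hsolI
  have hdomtop : ∀ s : ℝ, 0 ≤ s → s ∈ dom ⊤ := fun s hs => ⟨hs, ENNReal.ofReal_lt_top⟩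
  have hIcont : ∀ i, ContinuousOn (xI i) (Set.Icc (0:ℝ) T) := fun i t ht =>
    ((hIsol t (hdomtop t ht.1)).2.1 i).continuousAt.continuousWithinAt
  have hIcontw : ∀ i, ContinuousOn (wI i) (Set.Icc (0:ℝ) T) := fun i t ht =>
    ((hIsol t (hdomtop t ht.1)).2.2 i).continuousAt.continuousWithinAt
  have hIccne : (Set.Icc (0:ℝ) T).Nonempty := ⟨0, le_refl 0, hT.le⟩
  -- bounds on the classical solution
  have hMxi : ∀ i : Fin N, ∃ M, ∀ t ∈ Set.Icc (0:ℝ) T, ‖xI i t‖ ≤ M := by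
    intro i
    obtain ⟨t0, ht0, hmax⟩ := isCompact_Icc.exists_isMaxOn hIccne (hIcont i).norm
    exact ⟨‖xI i t0‖, fun t ht => hmax ht⟩
  have hMwi : ∀ i : Fin N, ∃ M, ∀ t ∈ Set.Icc (0:ℝ) T, ‖wI i t‖ ≤ M := by
    intro i
    obtain ⟨t0, ht0, hmax⟩ := isCompact_Icc.exists_isMaxOn hIccne (hIcontw i).norm
    exact ⟨‖wI i t0‖, fun t ht => hmax ht⟩
  choose Mxf hMxf using hMxi
  choose Mwf hMwf using hMwi
  set Mx : ℝ := max 0 (Finset.univ.sup' Finset.univ_nonempty Mxf) with hMxdef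
  set Mw : ℝ := max 0 (Finset.univ.sup' Finset.univ_nonempty Mwf) with hMwdef
  have hMx0 : 0 ≤ Mx := le_max_left _ _
  have hMw0 : 0 ≤ Mw := le_max_left _ _
  have hMx : ∀ i, ∀ t ∈ Set.Icc (0:ℝ) T, ‖xI i t‖ ≤ Mx := fun i t ht =>
    le_trans (hMxf i t ht) (le_trans (Finset.le_sup' Mxf (Finset.mem_univ i)) (le_max_right _ _))
  have hMw : ∀ i, ∀ t ∈ Set.Icc (0:ℝ) T, ‖wI i t‖ ≤ Mw := fun i t ht =>
    le_trans (hMwf i t ht) (le_trans (Finset.le_sup' Mwf (Finset.mem_univ i)) (le_max_right _ _))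
  -- minimal separation of the classical solution
  have hpair : ∀ pr : Fin N × Fin N, ∃ dp, 0 < dp ∧
      (pr.1 ≠ pr.2 → ∀ t ∈ Set.Icc (0:ℝ) T, dp ≤ ‖xI pr.1 t - xI pr.2 t‖) := by
    intro pr
    by_cases hpq : pr.1 ≠ pr.2
    · obtain ⟨t0, ht0, hmin⟩ := isCompact_Icc.exists_isMinOn hIccne
        ((hIcont pr.1).sub (hIcont pr.2)).norm
      refine ⟨‖xI pr.1 t0 - xI pr.2 t0‖, ?_, fun _ t ht => hmin ht⟩
      rw [norm_pos_iff, sub_ne_zero]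
      exact (hIsol t0 (hdomtop t0 ht0.1)).1 pr.1 pr.2 hpq
    · exact ⟨1, one_pos, fun hne => absurd hne hpq⟩
  choose δf hδf0 hδfs using hpair
  set δ : ℝ := Finset.univ.inf' Finset.univ_nonempty δf with hδdef
  have hδpos : 0 < δ := by
    rw [hδdef, Finset.lt_inf'_iff]
    exact fun pr _ => hδf0 pr
  have hsepI : ∀ i j, i ≠ j → ∀ t ∈ Set.Icc (0:ℝ) T, δ ≤ ‖xI i t - xI j t‖ := by
    intro i j hij t ht
    exact le_trans (Finset.inf'_le δf (Finset.mem_univ (i, j))) (hδfs (i, j) hij t ht)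
  -- constants
  set B : ℝ := Mx + Mw + δ + 1 with hBdef
  set ρ : ℝ := δ / 4 with hρdef
  set δ' : ℝ := δ / 2 with hδ'def
  have hρpos : 0 < ρ := by rw [hρdef]; linarith
  have hB1 : 1 ≤ B := by rw [hBdef]; linarith
  have hMxB : Mx + ρ ≤ B := by rw [hBdef, hρdef]; linarith
  have hMwB : Mw + ρ ≤ B := by rw [hBdef, hρdef]; linarith
  have hφM0 : 0 ≤ φM := le_trans (hφ0 0) (hφM 0)
  obtain ⟨Kφ, hKφ0, hφL⟩ := locLip_compact_bound hφ
    (fun r => by rw [abs_of_nonneg (hφ0 r)]; exact hφM r)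
    (isCompact_Icc (a := (0:ℝ)) (b := 2 * B))
  set Rb : ℝ := Finset.univ.sup' Finset.univ_nonempty (fun pr : Fin N × Fin N => R pr.1 pr.2)
    with hRbdef
  have hRB : ∀ i j, |R i j| ≤ Rb := by
    intro i j
    rw [abs_of_nonneg (hRnn i j)]
    exact Finset.le_sup' (f := fun pr : Fin N × Fin N => R pr.1 pr.2) (Finset.mem_univ (i, j))
  have hRb0 : 0 ≤ Rb := le_trans (abs_nonneg _) (hRB ⟨0, hNpos⟩ ⟨0, hNpos⟩)
  set Kf : ℝ := Cforce κ₀ κ₁ κ₂ B δ' Kφ φM Rb with hKfdef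
  have hδ'pos : 0 < δ' := by rw [hδ'def]; linarith
  have hKf0 : 0 ≤ Kf := Cforce_nonneg hκ₀ hκ₁ hκ₂.le hB1 hδ'pos hKφ0 hφM0 hRb0
  set K : ℝ := 2 * Kf + 1 with hKdef
  have hKpos : 0 < K := by rw [hKdef]; linarith
  set A : ℝ := (Kf + 1) * (2 * B * (B ^ 2 + 1)) * Real.exp (K * T) / K with hAdef
  have hA0 : 0 ≤ A := by rw [hAdef]; positivity
  have hNr : (2:ℝ) ≤ (N : ℝ) := by exact_mod_cast hN
  set mhat : ℝ := min (ρ / 2) (min 1 (ε / (2 * (N:ℝ) + 1))) with hmhat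
  have hmhat0 : 0 < mhat := by
    rw [hmhat]
    apply lt_min (by linarith)
    exact lt_min one_pos (by positivity)
  have htend : Tendsto (fun c' : ℝ => A / c' ^ 2) atTop (𝓝 0) :=
    Tendsto.div_atTop tendsto_const_nhds (tendsto_pow_atTop (by norm_num))
  have hev2 : ∀ᶠ c' : ℝ in atTop, A / c' ^ 2 < mhat :=
    htend.eventually_lt_const hmhat0
  filter_upwards [eventually_ge_atTop (max c (2 * B + 1)), hev2] with c' hc' hAc'
  have hcc : c ≤ c' := le_trans (le_max_left _ _) hc'
  have hc2B : 2 * B + 1 ≤ c' := le_trans (le_max_right _ _) hc'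
  have hc'pos : (0:ℝ) < c' := by linarith
  obtain ⟨hRsol, hRinit⟩ := hsol c' hcc
  have hinit' : ∀ i, X c' i 0 = xI i 0 ∧ what c' (V c' i 0) = wI i 0 := by
    intro i
    constructor
    · rw [(hRinit i).1, (hIinit i).1]
    · rw [(hRinit i).2, (hIinit i).2]
  have hfinal := main_perc d N hNpos hκ₀ hκ₁ hκ₂.le φ R hδpos hρdef hδ'def hB1 hMx0 hMw0
    hMxB hMwB hT hKφ0 hφM0 hRb0 hφ0 hφM hφL hRB (X c') (V c') xI wI hRsol hIsol hinit'
    hMx hMw hsepI hc2B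
    (by
      have h1 : A / c' ^ 2 < ρ / 2 := lt_of_lt_of_le hAc' (by rw [hmhat]; exact min_le_left _ _)
      rw [hAdef] at h1
      rw [hKfdef, hKdef] at *
      exact le_of_lt h1)
  intro t ht
  have hb := hfinal t ht
  set εb : ℝ := A / c' ^ 2 with hεb
  have hεb0 : 0 ≤ εb := by rw [hεb]; positivity
  have hεb1 : εb ≤ 1 :=
    le_of_lt (lt_of_lt_of_le hAc' (le_trans (by rw [hmhat]; exact min_le_right _ _) (min_le_left _ _)))
  have hεb2 : εb < ε / (2 * (N:ℝ) + 1) :=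
    lt_of_lt_of_le hAc' (le_trans (by rw [hmhat]; exact min_le_right _ _) (min_le_right _ _))
  have hbb : ‖((fun i => X c' i t - xI i t, fun i => what c' (V c' i t) - wI i t)
      : (Fin N → EuclideanSpace ℝ (Fin d)) × (Fin N → EuclideanSpace ℝ (Fin d)))‖ ≤ εb := by
    rw [hεb, hAdef, hKdef, hKfdef]
    exact hb
  set P : (Fin N → EuclideanSpace ℝ (Fin d)) × (Fin N → EuclideanSpace ℝ (Fin d)) :=
    ((fun i => X c' i t - xI i t), (fun i => what c' (V c' i t) - wI i t)) with hP
  have hbb1 : ‖P.1‖ ≤ εb := le_trans (norm_fst_le P) hbb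
  have hbb2 : ‖P.2‖ ≤ εb := le_trans (norm_snd_le P) hbb
  have hcomp1 : ∀ i, ‖X c' i t - xI i t‖ ≤ εb := by
    intro i
    have := le_trans (norm_le_pi_norm P.1 i) hbb1
    simpa [hP] using this
  have hcomp2 : ∀ i, ‖what c' (V c' i t) - wI i t‖ ≤ εb := by
    intro i
    have := le_trans (norm_le_pi_norm P.2 i) hbb2
    simpa [hP] using this
  clear_value P εb A K Kf mhat B ρ δ' δ Mx Mw Rb
  clear hb hbb hbb1 hbb2 hAc' hfinal
  have hsum : ∑ i, (‖X c' i t - xI i t‖ ^ 2 + ‖what c' (V c' i t) - wI i t‖ ^ 2)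
      ≤ (N : ℝ) * (2 * εb ^ 2) := by
    calc ∑ i, (‖X c' i t - xI i t‖ ^ 2 + ‖what c' (V c' i t) - wI i t‖ ^ 2)
        ≤ ∑ _i : Fin N, (εb ^ 2 + εb ^ 2) := by
          apply Finset.sum_le_sum
          intro i _
          exact add_le_add (pow_le_pow_left₀ (norm_nonneg _) (hcomp1 i) 2)
            (pow_le_pow_left₀ (norm_nonneg _) (hcomp2 i) 2)
      _ = (N : ℝ) * (2 * εb ^ 2) := by
          rw [Finset.sum_const, Finset.card_univ, Fintype.card_fin, nsmul_eq_mul]; ring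
  have hfin : (N : ℝ) * (2 * εb ^ 2) < ε := by
    have h1 : εb ^ 2 ≤ εb := by nlinarith
    have h2 : (N : ℝ) * (2 * εb ^ 2) ≤ 2 * (N:ℝ) * εb := by nlinarith
    have h3 : 2 * (N:ℝ) * εb < 2 * (N:ℝ) * (ε / (2 * (N:ℝ) + 1)) :=
      mul_lt_mul_of_pos_left hεb2 (by linarith)
    have h4 : 2 * (N:ℝ) * (ε / (2 * (N:ℝ) + 1)) < ε := by
      rw [mul_div_assoc', div_lt_iff₀ (by linarith : (0:ℝ) < 2 * (N:ℝ) + 1)]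
      nlinarith
    linarith
  linarith
end
end

section
/- (Equivalence of alignment notions) Let {(x_i, v_i)}_{i=1}^N be a global-in-time solution of the RCS model with bonding force on [0,∞) such that ∑_{i=1}^N w_i(0) = 0 and sup_{t ≥ 0} max_i |w_i(t)| < ∞. Then the following are equivalent: (a) lim_{t→∞} max_{i,j} |v_i(t) − v_j(t)| = 0; (b) lim_{t→∞} max_{i,j} |w_i(t) − w_j(t)| = 0; (c) lim_{t→∞} max_i |w_i(t)| = 0; (d) lim_{t→∞} max_i |v_i(t)| = 0. -/
open scoped BigOperators ENNReal Topology
open Filter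

noncomputable section

/-! ### Auxiliary lemmas -/

/-- Radial Lorentz factor. -/
def glor (c r : ℝ) : ℝ := 1 / Real.sqrt (1 - r ^ 2 / c ^ 2)

/-- Radial version of `Fmap`. -/
def gF (c r : ℝ) : ℝ := glor c r * (1 + glor c r / c ^ 2)

lemma lorentz_eq_glor {d : ℕ} (c : ℝ) (v : EuclideanSpace ℝ (Fin d)) :
    lorentz c v = glor c ‖v‖ := rfl

lemma Fmap_eq_gF {d : ℕ} (c : ℝ) (v : EuclideanSpace ℝ (Fin d)) :
    Fmap c v = gF c ‖v‖ := rfl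

lemma arg_pos {c r : ℝ} (hc : 0 < c) (hr : 0 ≤ r) (h : r < c) : 0 < 1 - r ^ 2 / c ^ 2 := by
  rw [sub_pos]
  exact (div_lt_one (by positivity)).mpr (by nlinarith)

lemma one_le_glor {c r : ℝ} (hc : 0 < c) (hr : 0 ≤ r) (h : r < c) : 1 ≤ glor c r := by
  have h1 : 0 < 1 - r ^ 2 / c ^ 2 := arg_pos hc hr h
  have h2 : Real.sqrt (1 - r ^ 2 / c ^ 2) ≤ 1 :=
    Real.sqrt_le_one.mpr (by nlinarith [div_nonneg (sq_nonneg r) (sq_nonneg c)])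
  have h3 : 0 < Real.sqrt (1 - r ^ 2 / c ^ 2) := Real.sqrt_pos.mpr h1
  rw [glor, le_div_iff₀ h3, one_mul]
  exact h2

lemma glor_mono {c r s : ℝ} (hc : 0 < c) (hr : 0 ≤ r) (hrs : r ≤ s) (hs : s < c) :
    glor c r ≤ glor c s := by
  have h1 : 0 < 1 - s ^ 2 / c ^ 2 := arg_pos hc (hr.trans hrs) hs
  have h2 : 1 - s ^ 2 / c ^ 2 ≤ 1 - r ^ 2 / c ^ 2 := by
    have h : r ^ 2 ≤ s ^ 2 := by nlinarith
    have hc2 : (0:ℝ) < c ^ 2 := by positivity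
    gcongr
  exact one_div_le_one_div_of_le (Real.sqrt_pos.mpr h1) (Real.sqrt_le_sqrt h2)

lemma one_le_gF {c r : ℝ} (hc : 0 < c) (hr : 0 ≤ r) (h : r < c) : 1 ≤ gF c r := by
  have h1 := one_le_glor hc hr h
  have hc2 : (0:ℝ) < c ^ 2 := by positivity
  rw [gF]
  nlinarith [mul_nonneg (by linarith : (0:ℝ) ≤ glor c r)
    (div_nonneg (by linarith : (0:ℝ) ≤ glor c r) hc2.le)]

lemma glor_le_gF {c r : ℝ} (hc : 0 < c) (hr : 0 ≤ r) (h : r < c) : glor c r ≤ gF c r := by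
  have h1 := one_le_glor hc hr h
  have hc2 : (0:ℝ) < c ^ 2 := by positivity
  rw [gF]
  nlinarith [mul_nonneg (by linarith : (0:ℝ) ≤ glor c r)
    (div_nonneg (by linarith : (0:ℝ) ≤ glor c r) hc2.le)]

lemma gF_mono {c r s : ℝ} (hc : 0 < c) (hr : 0 ≤ r) (hrs : r ≤ s) (hs : s < c) :
    gF c r ≤ gF c s := by
  have h1 := one_le_glor hc hr (lt_of_le_of_lt hrs hs)
  have h2 := one_le_glor hc (hr.trans hrs) hs
  have h3 := glor_mono hc hr hrs hs
  have hc2 : (0:ℝ) < c ^ 2 := by positivity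
  rw [gF, gF, div_eq_mul_inv, div_eq_mul_inv]
  have hinv : (0:ℝ) ≤ (c ^ 2)⁻¹ := by positivity
  nlinarith [mul_le_mul_of_nonneg_right
    (mul_le_mul h3 h3 (by linarith) (by linarith)) hinv]

lemma norm_what_eq {d : ℕ} {c : ℝ} (hc : 0 < c) {v : EuclideanSpace ℝ (Fin d)} (hv : ‖v‖ < c) :
    ‖what c v‖ = gF c ‖v‖ * ‖v‖ := by
  rw [what, norm_smul, Fmap_eq_gF, Real.norm_eq_abs,
    abs_of_nonneg (le_trans zero_le_one (one_le_gF hc (norm_nonneg v) hv))]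

lemma norm_sub_le_norm_what_sub {d : ℕ} {c : ℝ} (hc : 0 < c)
    {u v : EuclideanSpace ℝ (Fin d)} (hu : ‖u‖ < c) (hv : ‖v‖ < c) :
    ‖u - v‖ ≤ ‖what c u - what c v‖ := by
  set a : ℝ := Fmap c u - 1 with ha_def
  set b : ℝ := Fmap c v - 1 with hb_def
  have ha : 0 ≤ a := by
    have := one_le_gF hc (norm_nonneg u) hu
    rw [ha_def, Fmap_eq_gF]; linarith
  have hb : 0 ≤ b := by
    have := one_le_gF hc (norm_nonneg v) hv
    rw [hb_def, Fmap_eq_gF]; linarith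
  have hdecomp : what c u - what c v = (u - v) + (a • u - b • v) := by
    rw [what, what, ha_def, hb_def, sub_smul, sub_smul, one_smul, one_smul]
    abel
  have hmono : 0 ≤ (inner ℝ (a • u - b • v) (u - v) : ℝ) := by
    have hexp : (inner ℝ (a • u - b • v) (u - v) : ℝ)
        = a * ‖u‖ ^ 2 - (a + b) * (inner ℝ u v : ℝ) + b * ‖v‖ ^ 2 := by
      rw [inner_sub_left, inner_sub_right, inner_sub_right, real_inner_smul_left,
        real_inner_smul_left, real_inner_smul_left, real_inner_smul_left,
        real_inner_self_eq_norm_sq, real_inner_self_eq_norm_sq, real_inner_comm v u]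
      ring
    have hip : (inner ℝ u v : ℝ) ≤ ‖u‖ * ‖v‖ := real_inner_le_norm u v
    rcases le_total ‖u‖ ‖v‖ with hn | hn
    · have hab : a ≤ b := by
        have := gF_mono hc (norm_nonneg u) hn hv
        rw [ha_def, hb_def, Fmap_eq_gF, Fmap_eq_gF]; linarith
      rw [hexp]
      have h1 : (a + b) * (inner ℝ u v : ℝ) ≤ (a + b) * (‖u‖ * ‖v‖) :=
        mul_le_mul_of_nonneg_left hip (add_nonneg ha hb)
      have h2 : (0:ℝ) ≤ (‖v‖ - ‖u‖) * (b * ‖v‖ - a * ‖u‖) :=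
        mul_nonneg (sub_nonneg.mpr hn)
          (sub_nonneg.mpr (mul_le_mul hab hn (norm_nonneg u) hb))
      nlinarith [h1, h2]
    · have hab : b ≤ a := by
        have := gF_mono hc (norm_nonneg v) hn hu
        rw [ha_def, hb_def, Fmap_eq_gF, Fmap_eq_gF]; linarith
      rw [hexp]
      have h1 : (a + b) * (inner ℝ u v : ℝ) ≤ (a + b) * (‖u‖ * ‖v‖) :=
        mul_le_mul_of_nonneg_left hip (add_nonneg ha hb)
      have h2 : (0:ℝ) ≤ (‖u‖ - ‖v‖) * (a * ‖u‖ - b * ‖v‖) :=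
        mul_nonneg (sub_nonneg.mpr hn)
          (sub_nonneg.mpr (mul_le_mul hab hn (norm_nonneg v) ha))
      nlinarith [h1, h2]
  have hkey : ‖u - v‖ ^ 2 ≤ ‖what c u - what c v‖ * ‖u - v‖ := by
    have h1 : ‖u - v‖ ^ 2 ≤ (inner ℝ (what c u - what c v) (u - v) : ℝ) := by
      rw [hdecomp, inner_add_left, real_inner_self_eq_norm_sq]
      linarith
    have h2 : (inner ℝ (what c u - what c v) (u - v) : ℝ)
        ≤ ‖what c u - what c v‖ * ‖u - v‖ := real_inner_le_norm _ _
    linarith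
  rcases eq_or_lt_of_le (norm_nonneg (u - v)) with h0 | h0
  · rw [← h0]; exact norm_nonneg _
  · exact le_of_mul_le_mul_right
      (by nlinarith : ‖u - v‖ * ‖u - v‖ ≤ ‖what c u - what c v‖ * ‖u - v‖) h0

lemma sum_antisymm {N : ℕ} {E : Type*} [AddCommGroup E] [Module ℝ E] [NoZeroSMulDivisors ℝ E]
    (f : Fin N → Fin N → E) (h : ∀ i j, f j i = - f i j) :
    ∑ i, ∑ j, f i j = 0 := by
  have h1 : ∑ i, ∑ j, f i j = ∑ i, ∑ j, f j i := Finset.sum_comm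
  have h2 : ∑ i, ∑ j, f j i = - ∑ i, ∑ j, f i j := by
    calc ∑ i, ∑ j, f j i = ∑ i, ∑ j, -(f i j) :=
          Finset.sum_congr rfl fun i _ => Finset.sum_congr rfl fun j _ => h i j
      _ = - ∑ i, ∑ j, f i j := by simp
  have h3 : ∑ i, ∑ j, f i j = - ∑ i, ∑ j, f i j := h1.trans h2
  have h4 : (2:ℝ) • (∑ i, ∑ j, f i j) = 0 := by
    rw [two_smul]
    nth_rewrite 2 [h3]
    simp
  exact (smul_eq_zero.mp h4).resolve_left (by norm_num)

lemma sum_rcsForce {d N : ℕ} (κ₀ κ₁ κ₂ : ℝ) (φ : ℝ → ℝ) (R : Fin N → Fin N → ℝ)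
    (hRsym : ∀ i j, R i j = R j i) (X V : Fin N → EuclideanSpace ℝ (Fin d)) :
    ∑ i, rcsForce N κ₀ κ₁ κ₂ φ R X V i = 0 := by
  simp only [rcsForce]
  rw [Finset.sum_add_distrib, ← Finset.smul_sum, ← Finset.smul_sum]
  have e1 : ∑ i, ∑ j, φ ‖X i - X j‖ • (V j - V i) = 0 := by
    refine sum_antisymm _ fun i j => ?_
    rw [norm_sub_rev (X j) (X i), ← smul_neg, neg_sub]
  have e2 : ∑ i, ∑ j ∈ Finset.univ.filter (fun j => j ≠ i),
      ((κ₁ * ((inner ℝ (V j - V i) (X j - X i) : ℝ) / ‖X j - X i‖)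
          + κ₂ * (‖X i - X j‖ - R i j)) / ‖X j - X i‖) • (X j - X i) = 0 := by
    have hfull : ∀ i, ∑ j ∈ Finset.univ.filter (fun j => j ≠ i),
        ((κ₁ * ((inner ℝ (V j - V i) (X j - X i) : ℝ) / ‖X j - X i‖)
            + κ₂ * (‖X i - X j‖ - R i j)) / ‖X j - X i‖) • (X j - X i)
        = ∑ j, ((κ₁ * ((inner ℝ (V j - V i) (X j - X i) : ℝ) / ‖X j - X i‖)
            + κ₂ * (‖X i - X j‖ - R i j)) / ‖X j - X i‖) • (X j - X i) := by
      intro i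
      rw [Finset.sum_filter]
      refine Finset.sum_congr rfl fun j _ => ?_
      by_cases hj : j = i
      · subst hj
        simp
      · simp [hj]
    rw [Finset.sum_congr rfl fun i _ => hfull i]
    refine sum_antisymm _ fun i j => ?_
    have h1 : (inner ℝ (V i - V j) (X i - X j) : ℝ) = inner ℝ (V j - V i) (X j - X i) := by
      rw [← neg_sub (V j) (V i), ← neg_sub (X j) (X i), inner_neg_neg]
    rw [h1, hRsym j i, norm_sub_rev (X i) (X j), ← smul_neg, neg_sub]
  rw [e1, e2, smul_zero, smul_zero, add_zero]


lemma vM_lt_c {c U : ℝ} (hc : 0 < c) (hU0 : 0 ≤ U) :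
    c * U / Real.sqrt (c ^ 2 + U ^ 2) < c := by
  have hq : 0 < Real.sqrt (c ^ 2 + U ^ 2) := Real.sqrt_pos.mpr (by positivity)
  rw [div_lt_iff₀ hq]
  have hUq : U < Real.sqrt (c ^ 2 + U ^ 2) :=
    (Real.lt_sqrt hU0).mpr (by nlinarith)
  exact mul_lt_mul_of_pos_left hUq hc

lemma norm_le_vM {d : ℕ} {c U : ℝ} (hc : 0 < c) (hU0 : 0 ≤ U)
    {u : EuclideanSpace ℝ (Fin d)} (hu : ‖u‖ < c) (hw : ‖what c u‖ ≤ U) :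
    ‖u‖ ≤ c * U / Real.sqrt (c ^ 2 + U ^ 2) := by
  have hq : 0 < Real.sqrt (c ^ 2 + U ^ 2) := Real.sqrt_pos.mpr (by positivity)
  set r : ℝ := ‖u‖ with hrdef
  have hr0 : 0 ≤ r := norm_nonneg _
  have hwU : gF c r * r ≤ U := by
    rw [← norm_what_eq hc hu]; exact hw
  have h2 : glor c r * r ≤ U :=
    le_trans (mul_le_mul_of_nonneg_right (glor_le_gF hc hr0 hu) hr0) hwU
  have hargpos : 0 < 1 - r ^ 2 / c ^ 2 := arg_pos hc hr0 hu
  have hs : 0 < Real.sqrt (1 - r ^ 2 / c ^ 2) := Real.sqrt_pos.mpr hargpos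
  have h3 : r ≤ U * Real.sqrt (1 - r ^ 2 / c ^ 2) := by
    rw [glor, div_mul_eq_mul_div, one_mul, div_le_iff₀ hs] at h2
    exact h2
  have hsq : Real.sqrt (1 - r ^ 2 / c ^ 2) ^ 2 = 1 - r ^ 2 / c ^ 2 :=
    Real.sq_sqrt hargpos.le
  have h4 : r ^ 2 ≤ U ^ 2 * (1 - r ^ 2 / c ^ 2) := by
    calc r ^ 2 ≤ (U * Real.sqrt (1 - r ^ 2 / c ^ 2)) ^ 2 := by
          exact pow_le_pow_left₀ hr0 h3 2
      _ = U ^ 2 * (1 - r ^ 2 / c ^ 2) := by rw [mul_pow, hsq]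
  have hc2 : (0:ℝ) < c ^ 2 := by positivity
  have hcr : (1 - r ^ 2 / c ^ 2) * c ^ 2 = c ^ 2 - r ^ 2 := by field_simp
  have h4c : r ^ 2 * c ^ 2 ≤ U ^ 2 * (c ^ 2 - r ^ 2) := by
    calc r ^ 2 * c ^ 2 ≤ U ^ 2 * (1 - r ^ 2 / c ^ 2) * c ^ 2 :=
          mul_le_mul_of_nonneg_right h4 hc2.le
      _ = U ^ 2 * (c ^ 2 - r ^ 2) := by rw [mul_assoc, hcr]
  have h5 : r ^ 2 * (c ^ 2 + U ^ 2) ≤ (c * U) ^ 2 := by nlinarith [h4c]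
  have h6 : r * Real.sqrt (c ^ 2 + U ^ 2) ≤ c * U := by
    refine le_of_pow_le_pow_left₀ two_ne_zero (by positivity) ?_
    have hqq : Real.sqrt (c ^ 2 + U ^ 2) ^ 2 = c ^ 2 + U ^ 2 :=
      Real.sq_sqrt (by positivity)
    calc (r * Real.sqrt (c ^ 2 + U ^ 2)) ^ 2 = r ^ 2 * (c ^ 2 + U ^ 2) := by
          rw [mul_pow, hqq]
      _ ≤ (c * U) ^ 2 := h5
  rw [le_div_iff₀ hq]
  exact h6

/-- Equivalence of alignment notions: for a global solution of the RCS model with bonding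
force with zero total initial momentum and uniformly bounded momenta, alignment of
velocities, alignment of momenta, decay of momenta and decay of velocities are all
equivalent. -/
theorem alignment_equivalences
    (d N : ℕ) (hd : 1 ≤ d) (hN : 2 ≤ N)
    (c κ₀ κ₁ κ₂ : ℝ) (hc : 0 < c) (hκ₀ : 0 ≤ κ₀) (hκ₁ : 0 ≤ κ₁) (hκ₂ : 0 ≤ κ₂)
    (φ : ℝ → ℝ) (φM : ℝ) (hφ : LocallyLipschitz φ)
    (hφ0 : ∀ r, 0 ≤ φ r) (hφM : ∀ r, φ r ≤ φM)
    (R : Fin N → Fin N → ℝ) (hR0 : ∀ i, R i i = 0)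
    (hRsym : ∀ i j, R i j = R j i) (hRnn : ∀ i j, 0 ≤ R i j)
    (x v : Fin N → ℝ → EuclideanSpace ℝ (Fin d))
    (hsol : IsRCSSol N c κ₀ κ₁ κ₂ φ R ⊤ x v)
    (hzero : ∑ i, what c (v i 0) = 0)
    (hbd : ∃ Uw : ℝ, ∀ t ∈ dom ⊤, ∀ i, ‖what c (v i t)‖ ≤ Uw) :
    ((∀ i j : Fin N, Filter.Tendsto (fun t => ‖v i t - v j t‖) Filter.atTop (nhds 0)) ↔
      (∀ i j : Fin N,
        Filter.Tendsto (fun t => ‖what c (v i t) - what c (v j t)‖) Filter.atTop (nhds 0))) ∧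
    ((∀ i j : Fin N,
        Filter.Tendsto (fun t => ‖what c (v i t) - what c (v j t)‖) Filter.atTop (nhds 0)) ↔
      (∀ i : Fin N, Filter.Tendsto (fun t => ‖what c (v i t)‖) Filter.atTop (nhds 0))) ∧
    ((∀ i : Fin N, Filter.Tendsto (fun t => ‖what c (v i t)‖) Filter.atTop (nhds 0)) ↔
      (∀ i : Fin N, Filter.Tendsto (fun t => ‖v i t‖) Filter.atTop (nhds 0))) := by
  classical
  have hdomtop : ∀ t : ℝ, 0 ≤ t → t ∈ dom (⊤ : ℝ≥0∞) := fun t ht =>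
    ⟨ht, by simp [ENNReal.ofReal_lt_top]⟩
  obtain ⟨Uw, hUw⟩ := hbd
  set U : ℝ := max Uw 0 with hUdef
  have hU0 : 0 ≤ U := le_max_right _ _
  have hUb : ∀ t : ℝ, 0 ≤ t → ∀ i, ‖what c (v i t)‖ ≤ U := fun t ht i =>
    (hUw t (hdomtop t ht) i).trans (le_max_left _ _)
  set vM : ℝ := c * U / Real.sqrt (c ^ 2 + U ^ 2) with hvMdef
  have hvMc : vM < c := vM_lt_c hc hU0
  have hvlt : ∀ t : ℝ, 0 ≤ t → ∀ i, ‖v i t‖ < c := fun t ht i =>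
    (hsol t (hdomtop t ht)).1 i
  -- velocities stay in the ball of radius vM
  have hvle : ∀ t : ℝ, 0 ≤ t → ∀ i, ‖v i t‖ ≤ vM := fun t ht i =>
    norm_le_vM hc hU0 (hvlt t ht i) (hUb t ht i)
  -- conservation of total momentum
  have hforce0 : ∀ t : ℝ, 0 ≤ t →
      HasDerivAt (fun s => ∑ i, what c (v i s)) 0 t := by
    intro t ht
    have h := (hsol t (hdomtop t ht)).2.2.2
    have hsum := HasDerivAt.fun_sum (fun i (_ : i ∈ Finset.univ) => h i)
    rwa [sum_rcsForce κ₀ κ₁ κ₂ φ R hRsym] at hsum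
  have hcons : ∀ t : ℝ, 0 ≤ t → ∑ i, what c (v i t) = 0 := by
    intro t ht
    have hconst := constant_of_has_deriv_right_zero
      (f := fun s => ∑ i, what c (v i s)) (a := 0) (b := t)
      (fun s hs => ((hforce0 s hs.1).continuousAt).continuousWithinAt)
      (fun s hs => (hforce0 s hs.1).hasDerivWithinAt)
    have h0 : (∑ i, what c (v i t)) = ∑ i, what c (v i 0) :=
      hconst t (Set.mem_Icc.mpr ⟨ht, le_refl t⟩)
    rw [h0, hzero]
  -- (a) → (b)
  have hab : (∀ i j : Fin N, Tendsto (fun t => ‖v i t - v j t‖) atTop (nhds 0)) →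
      ∀ i j : Fin N,
        Tendsto (fun t => ‖what c (v i t) - what c (v j t)‖) atTop (nhds 0) := by
    intro ha i j
    have hK : IsCompact (Metric.closedBall (0 : EuclideanSpace ℝ (Fin d)) vM) :=
      isCompact_closedBall _ _
    have hcont : ContinuousOn (what c) (Metric.closedBall (0 : EuclideanSpace ℝ (Fin d)) vM) := by
      have hl : ContinuousOn (fun u : EuclideanSpace ℝ (Fin d) => lorentz c u)
          (Metric.closedBall 0 vM) := by
        simp only [lorentz]
        refine ContinuousOn.div continuousOn_const ?_ ?_
        · exact (Real.continuous_sqrt.comp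
            (continuous_const.sub ((continuous_norm.pow 2).div_const _))).continuousOn
        · intro u hu
          rw [Metric.mem_closedBall, dist_zero_right] at hu
          exact ne_of_gt (Real.sqrt_pos.mpr
            (arg_pos hc (norm_nonneg u) (lt_of_le_of_lt hu hvMc)))
      have hF : ContinuousOn (fun u : EuclideanSpace ℝ (Fin d) => Fmap c u)
          (Metric.closedBall 0 vM) := by
        simp only [Fmap]
        exact hl.mul (continuousOn_const.add (hl.div_const _))
      have : ContinuousOn (fun u : EuclideanSpace ℝ (Fin d) => Fmap c u • u)
          (Metric.closedBall 0 vM) := hF.smul continuousOn_id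
      exact this
    have hUC := hK.uniformContinuousOn_of_continuous hcont
    rw [Metric.uniformContinuousOn_iff] at hUC
    rw [Metric.tendsto_atTop]
    intro ε hε
    obtain ⟨δ, hδ, hUC'⟩ := hUC ε hε
    obtain ⟨T, hT⟩ := Metric.tendsto_atTop.mp (ha i j) δ hδ
    refine ⟨max T 0, fun t htT => ?_⟩
    have ht0 : (0:ℝ) ≤ t := le_trans (le_max_right T 0) htT
    have h1 := hT t (le_trans (le_max_left T 0) htT)
    rw [Real.dist_eq, sub_zero, abs_of_nonneg (norm_nonneg _)] at h1
    have hmem1 : v i t ∈ Metric.closedBall (0 : EuclideanSpace ℝ (Fin d)) vM := by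
      rw [Metric.mem_closedBall, dist_zero_right]; exact hvle t ht0 i
    have hmem2 : v j t ∈ Metric.closedBall (0 : EuclideanSpace ℝ (Fin d)) vM := by
      rw [Metric.mem_closedBall, dist_zero_right]; exact hvle t ht0 j
    have h2 := hUC' (v i t) hmem1 (v j t) hmem2 (by rw [dist_eq_norm]; exact h1)
    rw [dist_eq_norm] at h2
    rw [Real.dist_eq, sub_zero, abs_of_nonneg (norm_nonneg _)]
    exact h2
  -- (b) → (a)
  have hba : (∀ i j : Fin N,
        Tendsto (fun t => ‖what c (v i t) - what c (v j t)‖) atTop (nhds 0)) →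
      ∀ i j : Fin N, Tendsto (fun t => ‖v i t - v j t‖) atTop (nhds 0) := by
    intro hb i j
    refine squeeze_zero' (Filter.eventually_atTop.mpr ⟨0, fun t _ => norm_nonneg _⟩)
      (Filter.eventually_atTop.mpr ⟨0, fun t ht =>
        norm_sub_le_norm_what_sub hc (hvlt t ht i) (hvlt t ht j)⟩) (hb i j)
  -- (b) → (c)
  have hbc : (∀ i j : Fin N,
        Tendsto (fun t => ‖what c (v i t) - what c (v j t)‖) atTop (nhds 0)) →
      ∀ i : Fin N, Tendsto (fun t => ‖what c (v i t)‖) atTop (nhds 0) := by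
    intro hb i
    have hN0 : (0:ℝ) < (N : ℝ) := by
      have : (0:ℕ) < N := by omega
      exact_mod_cast this
    have key : ∀ t : ℝ, 0 ≤ t →
        ‖what c (v i t)‖ ≤ ((N : ℝ))⁻¹ * ∑ j, ‖what c (v i t) - what c (v j t)‖ := by
      intro t ht
      have hsum : ∑ j, (what c (v i t) - what c (v j t)) = (N : ℝ) • what c (v i t) := by
        rw [Finset.sum_sub_distrib, hcons t ht, sub_zero, Finset.sum_const,
          Finset.card_univ, Fintype.card_fin, ← Nat.cast_smul_eq_nsmul ℝ]
      have hcalc : ‖what c (v i t)‖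
          = ((N : ℝ))⁻¹ * ‖∑ j, (what c (v i t) - what c (v j t))‖ := by
        rw [hsum, norm_smul, Real.norm_eq_abs, abs_of_pos hN0]
        field_simp
      rw [hcalc]
      exact mul_le_mul_of_nonneg_left (norm_sum_le _ _) (by positivity)
    have hlim : Tendsto (fun t => ((N : ℝ))⁻¹ *
        ∑ j, ‖what c (v i t) - what c (v j t)‖) atTop (nhds 0) := by
      have hsumlim : Tendsto (fun t => ∑ j, ‖what c (v i t) - what c (v j t)‖)
          atTop (nhds 0) := by
        have := tendsto_finset_sum Finset.univ (fun j (_ : j ∈ Finset.univ) => hb i j)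
        simpa using this
      simpa using hsumlim.const_mul ((N : ℝ))⁻¹
    exact squeeze_zero' (Filter.eventually_atTop.mpr ⟨0, fun t _ => norm_nonneg _⟩)
      (Filter.eventually_atTop.mpr ⟨0, fun t ht => key t ht⟩) hlim
  -- (c) → (b)
  have hcb : (∀ i : Fin N, Tendsto (fun t => ‖what c (v i t)‖) atTop (nhds 0)) →
      ∀ i j : Fin N,
        Tendsto (fun t => ‖what c (v i t) - what c (v j t)‖) atTop (nhds 0) := by
    intro hcc i j
    have hlim : Tendsto (fun t => ‖what c (v i t)‖ + ‖what c (v j t)‖) atTop (nhds 0) := by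
      simpa using (hcc i).add (hcc j)
    exact squeeze_zero (fun t => norm_nonneg _) (fun t => norm_sub_le _ _) hlim
  -- (c) → (d)
  have hcd : (∀ i : Fin N, Tendsto (fun t => ‖what c (v i t)‖) atTop (nhds 0)) →
      ∀ i : Fin N, Tendsto (fun t => ‖v i t‖) atTop (nhds 0) := by
    intro hcc i
    refine squeeze_zero' (Filter.eventually_atTop.mpr ⟨0, fun t _ => norm_nonneg _⟩)
      (Filter.eventually_atTop.mpr ⟨0, fun t ht => ?_⟩) (hcc i)
    have hvc : ‖v i t‖ < c := hvlt t ht i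
    rw [norm_what_eq hc hvc]
    nlinarith [one_le_gF hc (norm_nonneg (v i t)) hvc, norm_nonneg (v i t)]
  -- (d) → (c)
  have hdc : (∀ i : Fin N, Tendsto (fun t => ‖v i t‖) atTop (nhds 0)) →
      ∀ i : Fin N, Tendsto (fun t => ‖what c (v i t)‖) atTop (nhds 0) := by
    intro hd i
    have hlim : Tendsto (fun t => gF c vM * ‖v i t‖) atTop (nhds 0) := by
      simpa using (hd i).const_mul (gF c vM)
    refine squeeze_zero' (Filter.eventually_atTop.mpr ⟨0, fun t _ => norm_nonneg _⟩)
      (Filter.eventually_atTop.mpr ⟨0, fun t ht => ?_⟩) hlim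
    have hvc : ‖v i t‖ < c := hvlt t ht i
    rw [norm_what_eq hc hvc]
    exact mul_le_mul_of_nonneg_right
      (gF_mono hc (norm_nonneg _) (hvle t ht i) hvMc) (norm_nonneg _)
  refine ⟨⟨fun ha => hab ha, fun hb => hba hb⟩,
    ⟨fun hb => hbc hb, fun hcc => hcb hcc⟩,
    ⟨fun hcc => hcd hcc, fun hd => hdc hd⟩⟩
end
end

section
/- (Integrability of relative momenta) Assume κ₀ > 0 and κ₂ > 0, let {(x_i, v_i)}_{i=1}^N be a global-in-time solution of the RCS model with bonding force on [0,∞), let r̄ := max_{k≠l} R^∞_{kl} + √(4N(E(0) − N)/κ₂), and assume φ_m := min{φ(r) : 0 ≤ r ≤ r̄} > 0. Then for any constant C_L ∈ (0,1) such that C_L·|w_j(t) − w_i(t)| ≤ |v_j(t) − v_i(t)| for all t ≥ 0 and all i, j, one has ∫₀^∞ ∑_{i,j=1}^N |w_j(t) − w_i(t)|² dt ≤ 2N·E(0)/(κ₀·C_L²·φ_m) < ∞. -/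
open scoped BigOperators ENNReal Topology
open Filter

noncomputable section

open Set Filter MeasureTheory
open scoped RealInnerProductSpace

section AuxCalc
/-- `γ` as a function of `s = ‖v‖²`. -/
def gam (c s : ℝ) : ℝ := 1 / Real.sqrt (1 - s / c ^ 2)

def Ff (c s : ℝ) : ℝ := gam c s * (1 + gam c s / c ^ 2)

def rho (c s : ℝ) : ℝ := (Ff c s) ^ 2 * s

def Kk (c s : ℝ) : ℝ := c ^ 2 * (gam c s - 1) + ((gam c s) ^ 2 - Real.log (gam c s))

variable {c s : ℝ}

lemma one_sub_pos (hc : 0 < c) (hs : s < c ^ 2) : 0 < 1 - s / c ^ 2 := by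
  have : s / c ^ 2 < 1 := (div_lt_one (by positivity)).2 hs
  linarith

lemma gam_eq (hc : 0 < c) (hs : s < c ^ 2) :
    gam c s = (Real.sqrt (1 - s / c ^ 2))⁻¹ := one_div _

lemma gam_pos (hc : 0 < c) (hs : s < c ^ 2) : 0 < gam c s := by
  rw [gam_eq hc hs]
  exact inv_pos.2 (Real.sqrt_pos.2 (one_sub_pos hc hs))

lemma gam_sq (hc : 0 < c) (hs : s < c ^ 2) : (gam c s) ^ 2 = (1 - s / c ^ 2)⁻¹ := by
  have h := one_sub_pos hc hs
  rw [gam_eq hc hs, ← Real.sqrt_inv]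
  exact Real.sq_sqrt (inv_nonneg.2 h.le)

lemma gam_one_le (hc : 0 < c) (hs0 : 0 ≤ s) (hs : s < c ^ 2) : 1 ≤ gam c s := by
  rw [gam_eq hc hs]
  have hle : Real.sqrt (1 - s / c ^ 2) ≤ 1 := by
    have h1 : 1 - s / c ^ 2 ≤ 1 := by
      have : 0 ≤ s / c ^ 2 := by positivity
      linarith
    calc Real.sqrt (1 - s / c ^ 2) ≤ Real.sqrt 1 := Real.sqrt_le_sqrt h1
      _ = 1 := Real.sqrt_one
  have hpos : 0 < Real.sqrt (1 - s / c ^ 2) := Real.sqrt_pos.2 (one_sub_pos hc hs)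
  exact (one_le_inv₀ hpos).2 hle

lemma hasDerivAt_gam (hc : 0 < c) (hs : s < c ^ 2) :
    HasDerivAt (gam c) ((gam c s) ^ 3 / (2 * c ^ 2)) s := by
  have h1 : HasDerivAt (fun r : ℝ => 1 - r / c ^ 2) (-(1 / c ^ 2)) s := by
    simpa using ((hasDerivAt_id s).div_const (c ^ 2)).const_sub 1
  have h0 := one_sub_pos hc hs
  have h2 : HasDerivAt (fun r : ℝ => Real.sqrt (1 - r / c ^ 2))
      (1 / (2 * Real.sqrt (1 - s / c ^ 2)) * (-(1 / c ^ 2))) s :=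
    (Real.hasDerivAt_sqrt h0.ne').comp s h1
  have hne : Real.sqrt (1 - s / c ^ 2) ≠ 0 := (Real.sqrt_pos.2 h0).ne'
  have h3 := h2.inv hne
  have : gam c = fun r => (Real.sqrt (1 - r / c ^ 2))⁻¹ := by
    funext r; exact one_div _
  rw [this]
  refine h3.congr_deriv ?_
  symm
  set a := Real.sqrt (1 - s / c ^ 2) with ha
  have hsq : a ^ 2 = 1 - s / c ^ 2 := Real.sq_sqrt h0.le
  show a⁻¹ ^ 3 / (2 * c ^ 2) = _
  have hane : a ≠ 0 := hne
  field_simp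

lemma hasDerivAt_Ff (hc : 0 < c) (hs : s < c ^ 2) :
    HasDerivAt (Ff c) ((gam c s) ^ 3 / (2 * c ^ 2) * (1 + 2 * gam c s / c ^ 2)) s := by
  have hg := hasDerivAt_gam hc hs
  have : HasDerivAt (Ff c)
      ((gam c s) ^ 3 / (2 * c ^ 2) * (1 + gam c s / c ^ 2)
        + gam c s * ((gam c s) ^ 3 / (2 * c ^ 2) / c ^ 2)) s := by
    exact hg.mul ((hg.div_const (c ^ 2)).const_add 1)
  convert this using 1; ring

lemma hasDerivAt_rho (hc : 0 < c) (hs : s < c ^ 2) :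
    HasDerivAt (rho c)
      (2 * Ff c s * ((gam c s) ^ 3 / (2 * c ^ 2) * (1 + 2 * gam c s / c ^ 2)) * s
        + (Ff c s) ^ 2) s := by
  have hF := hasDerivAt_Ff hc hs
  have := (hF.pow 2).mul (hasDerivAt_id s)
  refine this.congr_deriv ?_; symm; simp only [id_eq, Pi.pow_apply]; ring

lemma hasDerivAt_Kk (hc : 0 < c) (hs : s < c ^ 2) :
    HasDerivAt (Kk c)
      ((gam c s) ^ 3 / (2 * c ^ 2) * (c ^ 2 + 2 * gam c s - 1 / gam c s)) s := by
  have hg := hasDerivAt_gam hc hs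
  have hgne : gam c s ≠ 0 := (gam_pos hc hs).ne'
  have hlog : HasDerivAt (fun r => Real.log (gam c r))
      ((gam c s) ^ 3 / (2 * c ^ 2) / gam c s) s := by
    exact ((Real.hasDerivAt_log hgne).comp s hg).congr_deriv (by ring)
  have : HasDerivAt (Kk c)
      (c ^ 2 * ((gam c s) ^ 3 / (2 * c ^ 2))
        + (2 * gam c s * ((gam c s) ^ 3 / (2 * c ^ 2))
          - (gam c s) ^ 3 / (2 * c ^ 2) / gam c s)) s := by
    refine ((hg.sub_const 1).const_mul (c ^ 2)).add (((hg.pow 2).sub hlog).congr_deriv ?_)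
    ring
  convert this using 1
  field_simp
  ring

lemma Ff_pos (hc : 0 < c) (hs : s < c ^ 2) : 0 < Ff c s := by
  have := gam_pos hc hs
  have : 0 < 1 + gam c s / c ^ 2 := by positivity
  exact mul_pos (gam_pos hc hs) this

lemma rhoD_pos (hc : 0 < c) (hs0 : 0 ≤ s) (hs : s < c ^ 2) :
    0 < 2 * Ff c s * ((gam c s) ^ 3 / (2 * c ^ 2) * (1 + 2 * gam c s / c ^ 2)) * s
        + (Ff c s) ^ 2 := by
  have hg := gam_pos hc hs
  have hF := Ff_pos hc hs
  have h1 : 0 ≤ 2 * Ff c s * ((gam c s) ^ 3 / (2 * c ^ 2) * (1 + 2 * gam c s / c ^ 2)) * s := by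
    positivity
  nlinarith [sq_nonneg (Ff c s)]

/-- the key identity `K' · 2F = ρ'`. -/
lemma key_identity (hc : 0 < c) (hs : s < c ^ 2) :
    (gam c s) ^ 3 / (2 * c ^ 2) * (c ^ 2 + 2 * gam c s - 1 / gam c s) * (2 * Ff c s)
      = 2 * Ff c s * ((gam c s) ^ 3 / (2 * c ^ 2) * (1 + 2 * gam c s / c ^ 2)) * s
        + (Ff c s) ^ 2 := by
  have h0 := one_sub_pos hc hs
  set u := Real.sqrt (1 - s / c ^ 2) with hu
  have hupos : 0 < u := Real.sqrt_pos.2 h0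
  have huu : u ^ 2 = 1 - s / c ^ 2 := Real.sq_sqrt h0.le
  have hgamu : gam c s = 1 / u := rfl
  have hs' : s = c ^ 2 * (1 - u ^ 2) := by rw [huu]; field_simp; ring
  rw [Ff, hgamu, hs']
  field_simp
  ring


section AuxCalc2
variable {c s y : ℝ}

lemma gam_zero (hc : 0 < c) : gam c 0 = 1 := by simp [gam]

lemma Kk_zero (hc : 0 < c) : Kk c 0 = 1 := by simp [Kk, gam_zero hc]

lemma one_le_Ff (hc : 0 < c) (hs0 : 0 ≤ s) (hs : s < c ^ 2) : 1 ≤ Ff c s := by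
  have h1 := gam_one_le hc hs0 hs
  have h2 : (1 : ℝ) ≤ 1 + gam c s / c ^ 2 := by
    have hg := (gam_pos hc hs).le
    have : 0 ≤ gam c s / c ^ 2 := div_nonneg hg (by positivity)
    linarith
  calc (1:ℝ) = 1 * 1 := by ring
    _ ≤ Ff c s := mul_le_mul h1 h2 zero_le_one (by linarith)

lemma rho_zero (hc : 0 < c) : rho c 0 = 0 := by simp [rho]

lemma rho_nonneg (hs0 : 0 ≤ s) : 0 ≤ rho c s := by
  have : 0 ≤ (Ff c s) ^ 2 := sq_nonneg _
  exact mul_nonneg this hs0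

lemma le_rho (hc : 0 < c) (hs0 : 0 ≤ s) (hs : s < c ^ 2) : s ≤ rho c s := by
  have h := one_le_Ff hc hs0 hs
  have : 1 ≤ (Ff c s) ^ 2 := by nlinarith
  calc s = 1 * s := (one_mul s).symm
    _ ≤ (Ff c s) ^ 2 * s := mul_le_mul_of_nonneg_right this hs0

lemma continuousOn_rho (hc : 0 < c) : ContinuousOn (rho c) (Ico 0 (c ^ 2)) :=
  fun s hs => ((hasDerivAt_rho hc hs.2).continuousAt).continuousWithinAt

lemma strictMonoOn_rho (hc : 0 < c) : StrictMonoOn (rho c) (Ico 0 (c ^ 2)) := by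
  have hint : interior (Ico (0:ℝ) (c ^ 2)) = Ioo 0 (c ^ 2) := interior_Ico
  apply strictMonoOn_of_deriv_pos (convex_Ico _ _) (continuousOn_rho hc)
  intro t ht
  rw [hint] at ht
  rw [(hasDerivAt_rho hc ht.2).deriv]
  exact rhoD_pos hc ht.1.le ht.2

lemma rho_surjOn (hc : 0 < c) (hy : 0 ≤ y) : ∃ s ∈ Ico 0 (c ^ 2), rho c s = y := by
  set t := c ^ 2 * y / (c ^ 2 + y) with ht
  have hc2 : (0:ℝ) < c ^ 2 := by positivity
  have ht0 : 0 ≤ t := by positivity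
  have htc : t < c ^ 2 := by
    rw [ht, div_lt_iff₀ (by linarith)]
    nlinarith
  have hyt : y ≤ rho c t := by
    have hgam : (gam c t) ^ 2 = (1 - t / c ^ 2)⁻¹ := gam_sq hc htc
    have h1 : 1 - t / c ^ 2 = c ^ 2 / (c ^ 2 + y) := by
      rw [ht]; field_simp; ring
    have hgam2 : (gam c t) ^ 2 = (c ^ 2 + y) / c ^ 2 := by
      rw [hgam, h1, inv_div]
    have hg := gam_pos hc htc
    have hgamF : gam c t ≤ Ff c t := by
      have h2 : (1:ℝ) ≤ 1 + gam c t / c ^ 2 := by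
        have := div_nonneg hg.le (sq_nonneg c)
        linarith
      have := mul_le_mul_of_nonneg_left h2 hg.le
      simpa [Ff] using this
    have : (gam c t) ^ 2 * t = y := by
      rw [hgam2, ht]; field_simp
    calc y = (gam c t) ^ 2 * t := this.symm
      _ ≤ (Ff c t) ^ 2 * t := by
          apply mul_le_mul_of_nonneg_right _ ht0
          have hg := (gam_pos hc htc).le
          nlinarith
      _ = rho c t := rfl
  have hcont : ContinuousOn (rho c) (Icc 0 t) :=
    (continuousOn_rho hc).mono (fun u hu => ⟨hu.1, lt_of_le_of_lt hu.2 htc⟩)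
  have := intermediate_value_Icc ht0 hcont
  have hmem : y ∈ Icc (rho c 0) (rho c t) := by
    constructor
    · rw [rho_zero hc]; exact hy
    · exact hyt
  obtain ⟨u, hu, hru⟩ := this hmem
  exact ⟨u, ⟨hu.1, lt_of_le_of_lt hu.2 htc⟩, hru⟩

def rhoInv (c : ℝ) (y : ℝ) : ℝ := Function.invFunOn (rho c) (Ico 0 (c ^ 2)) y

lemma rhoInv_rho (hc : 0 < c) (hs : s ∈ Ico 0 (c ^ 2)) : rhoInv c (rho c s) = s :=
  ((strictMonoOn_rho hc).injOn).leftInvOn_invFunOn hs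

lemma rho_rhoInv (hc : 0 < c) (hy : 0 ≤ y) : rho c (rhoInv c y) = y :=
  Function.invFunOn_eq (rho_surjOn hc hy)

lemma rhoInv_mem (hc : 0 < c) (hy : 0 ≤ y) : rhoInv c y ∈ Ico 0 (c ^ 2) :=
  Function.invFunOn_mem (rho_surjOn hc hy)

lemma rho_pos (hc : 0 < c) (hs0 : 0 < s) (hs : s < c ^ 2) : 0 < rho c s :=
  lt_of_lt_of_le hs0 (le_rho hc hs0.le hs)

lemma rhoInv_pos (hc : 0 < c) (hy : 0 < y) : 0 < rhoInv c y := by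
  rcases (rhoInv_mem hc hy.le).1.lt_or_eq with h | h
  · exact h
  · exfalso
    have := rho_rhoInv hc hy.le
    rw [← h, rho_zero hc] at this
    exact hy.ne this

lemma continuousAt_rhoInv (hc : 0 < c) (hy : 0 < y) : ContinuousAt (rhoInv c) y := by
  have hc2 : (0:ℝ) < c ^ 2 := by positivity
  set s₀ := rhoInv c y with hs₀
  have hmem : s₀ ∈ Ico 0 (c ^ 2) := rhoInv_mem hc hy.le
  have hs₀pos : 0 < s₀ := rhoInv_pos hc hy
  have hrs₀ : rho c s₀ = y := rho_rhoInv hc hy.le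
  rw [Metric.continuousAt_iff]
  intro ε hε
  set a := max (s₀ / 2) (s₀ - ε) with ha
  set b := min ((s₀ + c ^ 2) / 2) (s₀ + ε) with hb
  have has₀ : a < s₀ := by
    apply max_lt <;> linarith
  have haIco : a ∈ Ico (0:ℝ) (c ^ 2) := by
    constructor
    · exact le_trans (by positivity) (le_max_left _ _)
    · exact lt_trans has₀ hmem.2
  have hbIco : b ∈ Ico (0:ℝ) (c ^ 2) := by
    constructor
    · exact le_min (by positivity) (by linarith)
    · exact lt_of_le_of_lt (min_le_left _ _) (by linarith [hmem.2])
  have hs₀b : s₀ < b := by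
    apply lt_min <;> linarith [hmem.2]
  have hra : rho c a < y := by
    rw [← hrs₀]; exact strictMonoOn_rho hc haIco hmem has₀
  have hrb : y < rho c b := by
    rw [← hrs₀]; exact strictMonoOn_rho hc hmem hbIco hs₀b
  refine ⟨min (y - rho c a) (rho c b - y), lt_min (by linarith) (by linarith), ?_⟩
  intro z hz
  rw [Real.dist_eq] at hz
  have hz1 : rho c a < z := by
    have := abs_lt.1 hz
    have h2 := min_le_left (y - rho c a) (rho c b - y)
    linarith [this.1]
  have hz2 : z < rho c b := by
    have := abs_lt.1 hz
    have h2 := min_le_right (y - rho c a) (rho c b - y)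
    linarith [this.2]
  have hzpos : 0 < z := by
    have h0a : 0 ≤ rho c a := rho_nonneg haIco.1
    linarith
  have hzmem : rhoInv c z ∈ Ico 0 (c ^ 2) := rhoInv_mem hc hzpos.le
  have hrz : rho c (rhoInv c z) = z := rho_rhoInv hc hzpos.le
  have h1 : a < rhoInv c z := by
    by_contra h
    push_neg at h
    have := (strictMonoOn_rho hc).monotoneOn hzmem haIco h
    rw [hrz] at this
    linarith
  have h2 : rhoInv c z < b := by
    by_contra h
    push_neg at h
    have := (strictMonoOn_rho hc).monotoneOn hbIco hzmem h
    rw [hrz] at this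
    linarith
  rw [Real.dist_eq, abs_lt]
  constructor
  · have := le_max_right (s₀ / 2) (s₀ - ε)
    linarith
  · have := min_le_right ((s₀ + c ^ 2) / 2) (s₀ + ε)
    linarith

lemma one_le_Kk (hc : 0 < c) (hs0 : 0 ≤ s) (hs : s < c ^ 2) : 1 ≤ Kk c s := by
  have hg1 := gam_one_le hc hs0 hs
  have hlog : Real.log (gam c s) ≤ gam c s - 1 :=
    Real.log_le_sub_one_of_pos (gam_pos hc hs)
  have h1 : 0 ≤ c ^ 2 * (gam c s - 1) := by nlinarith
  have h2 : gam c s - 1 ≤ (gam c s) ^ 2 - 1 := by nlinarith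
  unfold Kk; nlinarith

lemma Kk_sub_one_le (hc : 0 < c) (hs0 : 0 ≤ s) (hs : s ≤ c ^ 2 / 2) :
    Kk c s - 1 ≤ 2 * (c ^ 2 + 1) / c ^ 2 * s := by
  have hsc : s < c ^ 2 := by nlinarith [sq_nonneg c]
  have hg1 := gam_one_le hc hs0 hsc
  have hgsq := gam_sq hc hsc
  have h0 := one_sub_pos hc hsc
  have hc2 : (0:ℝ) < c ^ 2 := by positivity
  have hhalf : (1:ℝ)/2 ≤ 1 - s / c ^ 2 := by
    have : s / c ^ 2 ≤ 1/2 := by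
      rw [div_le_iff₀ hc2]; linarith
    linarith
  have hg2le : (gam c s) ^ 2 ≤ 2 := by
    rw [hgsq]
    calc (1 - s / c ^ 2)⁻¹ ≤ ((1:ℝ)/2)⁻¹ := by
          apply inv_anti₀ (by norm_num) hhalf
      _ = 2 := by norm_num
  have hmul : (gam c s) ^ 2 * (1 - s / c ^ 2) = 1 := by
    rw [hgsq]; exact inv_mul_cancel₀ h0.ne'
  have hA : (gam c s) ^ 2 * (c ^ 2 - s) = c ^ 2 := by
    have h := hmul
    field_simp at h
    nlinarith [h]
  have hlog0 : 0 ≤ Real.log (gam c s) := Real.log_nonneg hg1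
  rw [div_mul_eq_mul_div, le_div_iff₀ hc2]
  unfold Kk
  have hB : (gam c s ^ 2 - 1) * c ^ 2 = gam c s ^ 2 * s := by linear_combination hA
  have hC : gam c s ^ 2 * s ≤ 2 * s := mul_le_mul_of_nonneg_right hg2le hs0
  have hD : gam c s - 1 ≤ gam c s ^ 2 - 1 := by nlinarith [hg1]
  nlinarith [hB, hC, hD, hlog0, hc2.le, hs0, mul_le_mul_of_nonneg_left hD hc2.le,
    mul_le_mul_of_nonneg_left hC hc2.le,
    mul_le_mul_of_nonneg_left (mul_le_mul_of_nonneg_left hD hc2.le) hc2.le]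

end AuxCalc2
end AuxCalc

section AuxKin
variable {d : ℕ} {c : ℝ}

lemma Fmap_eq (c : ℝ) (u : EuclideanSpace ℝ (Fin d)) : Fmap c u = Ff c (‖u‖ ^ 2) := rfl

lemma lorentz_eq (c : ℝ) (u : EuclideanSpace ℝ (Fin d)) : lorentz c u = gam c (‖u‖ ^ 2) := rfl

lemma norm_sq_mem (hc : 0 < c) {u : EuclideanSpace ℝ (Fin d)} (hu : ‖u‖ < c) :
    ‖u‖ ^ 2 ∈ Ico (0:ℝ) (c ^ 2) :=
  ⟨by positivity, by
    have := pow_lt_pow_left₀ hu (norm_nonneg u) (two_ne_zero)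
    simpa using this⟩

lemma norm_what_sq (hc : 0 < c) (u : EuclideanSpace ℝ (Fin d)) :
    ‖what c u‖ ^ 2 = rho c (‖u‖ ^ 2) := by
  rw [what, norm_smul, mul_pow, Real.norm_eq_abs, sq_abs, Fmap_eq]
  rfl

/-- Key pointwise lemma: derivative of the kinetic-energy term along the flow. -/
lemma kin_deriv (hc : 0 < c) {V G : ℝ → EuclideanSpace ℝ (Fin d)}
    (hV : ∀ t, 0 ≤ t → ‖V t‖ < c)
    (hW : ∀ t, 0 ≤ t → HasDerivAt (fun u => what c (V u)) (G t) t)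
    {t₀ : ℝ} (ht₀ : 0 < t₀) :
    HasDerivAt (fun t => Kk c (‖V t‖ ^ 2)) (⟪G t₀, V t₀⟫) t₀ := by
  set s : ℝ → ℝ := fun t => ‖V t‖ ^ 2 with hs_def
  set q : ℝ → ℝ := fun t => ‖what c (V t)‖ ^ 2 with hq_def
  have hsq : ∀ t, 0 ≤ t → q t = rho c (s t) := fun t _ => norm_what_sq hc (V t)
  have hsmem : ∀ t, 0 ≤ t → s t ∈ Ico (0:ℝ) (c ^ 2) := fun t ht => norm_sq_mem hc (hV t ht)
  have hWt₀ := hW t₀ ht₀.le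
  have hq : HasDerivAt q (2 * ⟪G t₀, what c (V t₀)⟫) t₀ := by
    have h := hWt₀.inner ℝ hWt₀
    have hqe : q = fun t => ⟪what c (V t), what c (V t)⟫ := by
      funext t; rw [hq_def]; exact (real_inner_self_eq_norm_sq _).symm
    rw [hqe]
    refine h.congr_deriv ?_
    symm
    rw [real_inner_comm]; ring
  by_cases hq0 : q t₀ = 0
  · -- degenerate case : `w(t₀) = 0`
    have hWzero : what c (V t₀) = 0 := by
      have h1 : ‖what c (V t₀)‖ = 0 := by
        have := hq0
        rw [hq_def] at this
        simpa [pow_eq_zero_iff] using this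
      simpa using h1
    have hFpos : 0 < Fmap c (V t₀) := by
      rw [Fmap_eq]; exact Ff_pos hc (hsmem t₀ ht₀.le).2
    have hVzero : V t₀ = 0 := by
      have h := hWzero
      rw [what] at h
      rcases smul_eq_zero.1 h with h' | h'
      · exact absurd h' hFpos.ne'
      · exact h'
    have hst₀ : s t₀ = 0 := by simp [hs_def, hVzero]
    have hinner : ⟪G t₀, V t₀⟫ = 0 := by simp [hVzero]
    rw [hinner]
    have hq' : HasDerivAt q 0 t₀ := by
      have : 2 * ⟪G t₀, what c (V t₀)⟫ = 0 := by simp [hWzero]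
      rwa [this] at hq
    have hqlo : q =o[𝓝 t₀] (fun t => t - t₀) := by
      have := hasDerivAt_iff_isLittleO.1 hq'
      simpa [hq0] using this
    rw [hasDerivAt_iff_isLittleO]
    have hKt₀ : Kk c (s t₀) = 1 := by rw [hst₀]; exact Kk_zero hc
    have hbound : ∀ᶠ t in 𝓝 t₀, ‖Kk c (s t) - Kk c (s t₀)‖ ≤
        (2 * (c ^ 2 + 1) / c ^ 2) * ‖q t‖ := by
      have h1 : ∀ᶠ t in 𝓝 t₀, 0 < t := Ioi_mem_nhds ht₀
      have h2 : ∀ᶠ t in 𝓝 t₀, q t < c ^ 2 / 2 := by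
        have : ContinuousAt q t₀ := hq.continuousAt
        have hlt : q t₀ < c ^ 2 / 2 := by rw [hq0]; positivity
        exact this.eventually_lt continuousAt_const hlt
      filter_upwards [h1, h2] with t ht hqt
      have hmem := hsmem t ht.le
      have hsle : s t ≤ q t := by
        rw [hsq t ht.le]; exact le_rho hc hmem.1 hmem.2
      have h1le : 1 ≤ Kk c (s t) := one_le_Kk hc hmem.1 hmem.2
      have hup : Kk c (s t) - 1 ≤ 2 * (c ^ 2 + 1) / c ^ 2 * s t :=
        Kk_sub_one_le hc hmem.1 (by linarith)
      have hqnn : 0 ≤ q t := by rw [hq_def]; positivity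
      rw [hKt₀, Real.norm_eq_abs, Real.norm_eq_abs, abs_of_nonneg hqnn,
        abs_of_nonneg (by linarith : (0:ℝ) ≤ Kk c (s t) - 1)]
      have hC : 0 ≤ 2 * (c ^ 2 + 1) / c ^ 2 := by positivity
      calc Kk c (s t) - 1 ≤ 2 * (c ^ 2 + 1) / c ^ 2 * s t := hup
        _ ≤ 2 * (c ^ 2 + 1) / c ^ 2 * q t := by
            exact mul_le_mul_of_nonneg_left hsle hC
    have hO : (fun t => Kk c (s t) - Kk c (s t₀)) =O[𝓝 t₀] q :=
      Asymptotics.IsBigO.of_bound _ hbound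
    have := hO.trans_isLittleO hqlo
    simpa using this
  · -- main case : `w(t₀) ≠ 0`
    have hqnn : 0 ≤ q t₀ := by rw [hq_def]; positivity
    have hqpos : 0 < q t₀ := lt_of_le_of_ne hqnn (Ne.symm hq0)
    have hq_eq : q t₀ = rho c (s t₀) := hsq t₀ ht₀.le
    have hmem₀ := hsmem t₀ ht₀.le
    have hs0pos : 0 < s t₀ := by
      rcases hmem₀.1.lt_or_eq with h | h
      · exact h
      · exfalso
        rw [← h, rho_zero hc] at hq_eq
        exact hq0 hq_eq
    set rD : ℝ := 2 * Ff c (s t₀) * ((gam c (s t₀)) ^ 3 / (2 * c ^ 2) *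
        (1 + 2 * gam c (s t₀) / c ^ 2)) * (s t₀) + (Ff c (s t₀)) ^ 2 with hrD_def
    set KD : ℝ := (gam c (s t₀)) ^ 3 / (2 * c ^ 2) *
        (c ^ 2 + 2 * gam c (s t₀) - 1 / gam c (s t₀)) with hKD_def
    have hrD : HasDerivAt (rho c) rD (s t₀) := hasDerivAt_rho hc hmem₀.2
    have hrDpos : 0 < rD := rhoD_pos hc hmem₀.1 hmem₀.2
    have hinvEq : rhoInv c (q t₀) = s t₀ := by
      rw [hq_eq]; exact rhoInv_rho hc hmem₀
    have hInv : HasDerivAt (rhoInv c) rD⁻¹ (q t₀) := by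
      refine HasDerivAt.of_local_left_inverse (f := rho c) (continuousAt_rhoInv hc hqpos) ?_ hrDpos.ne' ?_
      · rw [hinvEq]; exact hrD
      · filter_upwards [Ioi_mem_nhds hqpos] with y hy
        exact rho_rhoInv hc (le_of_lt hy)
    have hKD : HasDerivAt (Kk c) KD (rhoInv c (q t₀)) := by
      rw [hinvEq]; exact hasDerivAt_Kk hc hmem₀.2
    have h1 : HasDerivAt (fun t => rhoInv c (q t))
        (rD⁻¹ * (2 * ⟪G t₀, what c (V t₀)⟫)) t₀ := hInv.comp t₀ hq
    have hcomp : HasDerivAt (fun t => Kk c (rhoInv c (q t)))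
        (KD * (rD⁻¹ * (2 * ⟪G t₀, what c (V t₀)⟫))) t₀ := by have := hKD.comp t₀ h1; exact this
    have heq : (fun t => Kk c (rhoInv c (q t))) =ᶠ[𝓝 t₀] (fun t => Kk c (s t)) := by
      filter_upwards [Ioi_mem_nhds ht₀] with t ht
      rw [hsq t ht.le, rhoInv_rho hc (hsmem t ht.le)]
    have final : HasDerivAt (fun t => Kk c (s t))
        (KD * (rD⁻¹ * (2 * ⟪G t₀, what c (V t₀)⟫))) t₀ :=
      hcomp.congr_of_eventuallyEq heq.symm
    convert final using 1
    have hWV : what c (V t₀) = Ff c (s t₀) • V t₀ := by rw [what, Fmap_eq]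
    rw [hWV, real_inner_smul_right]
    have hkey := key_identity hc hmem₀.2
    have : KD * (rD⁻¹ * (2 * (Ff c (s t₀) * ⟪G t₀, V t₀⟫)))
        = (KD * (2 * Ff c (s t₀))) * rD⁻¹ * ⟪G t₀, V t₀⟫ := by ring
    rw [this, show KD * (2 * Ff c (s t₀)) = rD from hkey,
      mul_inv_cancel₀ hrDpos.ne', one_mul]

/-- Continuity (within `[0,∞)`) of the kinetic-energy term. -/
lemma kin_cont (hc : 0 < c) {V G : ℝ → EuclideanSpace ℝ (Fin d)}
    (hV : ∀ t, 0 ≤ t → ‖V t‖ < c)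
    (hW : ∀ t, 0 ≤ t → HasDerivAt (fun u => what c (V u)) (G t) t)
    {t₀ : ℝ} (ht₀ : 0 ≤ t₀) :
    ContinuousWithinAt (fun t => Kk c (‖V t‖ ^ 2)) (Ici 0) t₀ := by
  set s : ℝ → ℝ := fun t => ‖V t‖ ^ 2 with hs_def
  set q : ℝ → ℝ := fun t => ‖what c (V t)‖ ^ 2 with hq_def
  have hsq : ∀ t, 0 ≤ t → q t = rho c (s t) := fun t _ => norm_what_sq hc (V t)
  have hsmem : ∀ t, 0 ≤ t → s t ∈ Ico (0:ℝ) (c ^ 2) := fun t ht => norm_sq_mem hc (hV t ht)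
  have hqcont : ContinuousAt q t₀ := by
    have h := (hW t₀ ht₀).continuousAt
    exact (continuous_norm.continuousAt.comp h).pow 2
  by_cases hq0 : q t₀ = 0
  · -- squeeze
    have hmem := hsmem t₀ ht₀
    have hst₀ : s t₀ = 0 := by
      have h1 : s t₀ ≤ q t₀ := by
        rw [hsq t₀ ht₀]; exact le_rho hc hmem.1 hmem.2
      have h2 : s t₀ ≤ 0 := by rw [← hq0]; exact h1
      exact le_antisymm h2 hmem.1
    have hK1 : Kk c (s t₀) = 1 := by rw [hst₀]; exact Kk_zero hc
    show Tendsto (fun t => Kk c (s t)) (nhdsWithin t₀ (Ici 0)) (nhds (Kk c (s t₀)))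
    rw [hK1]
    set C : ℝ := 2 * (c ^ 2 + 1) / c ^ 2 with hC_def
    have hCpos : 0 < C := by positivity
    have hqt : Tendsto q (nhdsWithin t₀ (Ici 0)) (nhds 0) := by
      have := hqcont.continuousWithinAt (s := Ici 0)
      rwa [ContinuousWithinAt, hq0] at this
    have hupper : Tendsto (fun t => 1 + C * q t) (nhdsWithin t₀ (Ici 0)) (nhds 1) := by
      have h := (hqt.const_mul C).const_add 1
      simpa using h
    have hsmall : ∀ᶠ t in nhdsWithin t₀ (Ici 0), q t < c ^ 2 / 2 :=
      hqt.eventually_lt_const (by positivity)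
    have hmemev : ∀ᶠ t in nhdsWithin t₀ (Ici 0), t ∈ Ici (0:ℝ) :=
      eventually_mem_nhdsWithin
    apply tendsto_of_tendsto_of_tendsto_of_le_of_le' tendsto_const_nhds hupper
    · filter_upwards [hmemev] with t ht
      exact one_le_Kk hc (hsmem t ht).1 (hsmem t ht).2
    · filter_upwards [hmemev, hsmall] with t ht hqt'
      have hm := hsmem t ht
      have hsle : s t ≤ q t := by
        rw [hsq t ht]; exact le_rho hc hm.1 hm.2
      have hup : Kk c (s t) - 1 ≤ C * s t := Kk_sub_one_le hc hm.1 (by linarith)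
      have hqnn : 0 ≤ q t := by rw [hq_def]; positivity
      have := mul_le_mul_of_nonneg_left hsle hCpos.le
      linarith
  · have hqpos : 0 < q t₀ := lt_of_le_of_ne (by rw [hq_def]; positivity) (Ne.symm hq0)
    have hinvEq : rhoInv c (q t₀) = s t₀ := by
      rw [hsq t₀ ht₀]; exact rhoInv_rho hc (hsmem t₀ ht₀)
    have hKcont : ContinuousAt (Kk c) (rhoInv c (q t₀)) := by
      rw [hinvEq]
      exact (hasDerivAt_Kk hc (hsmem t₀ ht₀).2).continuousAt
    have hicont : ContinuousAt (rhoInv c) (q t₀) := continuousAt_rhoInv hc hqpos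
    have hfull : ContinuousAt (fun t => Kk c (rhoInv c (q t))) t₀ :=
      ContinuousAt.comp (x := t₀) (g := Kk c) hKcont (hicont.comp hqcont)
    have h0 : ∀ t ∈ Ici (0:ℝ), Kk c (s t) = Kk c (rhoInv c (q t)) := by
      intro t ht
      rw [hsq t ht, rhoInv_rho hc (hsmem t ht)]
    exact hfull.continuousWithinAt.congr h0 (h0 t₀ ht₀)

end AuxKin

section AuxAlg
variable {d N : ℕ}

/-- symmetrization identity for double sums. -/
lemma sym_pair (a : Fin N → Fin N → ℝ) (hsym : ∀ i j, a i j = a j i)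
    (U V : Fin N → EuclideanSpace ℝ (Fin d)) :
    ∑ i, ∑ j, a i j * ⟪U j - U i, V i⟫
      = -(1/2) * ∑ i, ∑ j, a i j * ⟪U j - U i, V j - V i⟫ := by
  have hswap : ∑ i, ∑ j, a i j * ⟪U j - U i, V i⟫
      = ∑ i, ∑ j, a i j * ⟪U i - U j, V j⟫ := by
    rw [Finset.sum_comm]
    refine Finset.sum_congr rfl fun i _ => Finset.sum_congr rfl fun j _ => ?_
    rw [hsym]
  have key : (∑ i, ∑ j, a i j * ⟪U j - U i, V i⟫) + (∑ i, ∑ j, a i j * ⟪U j - U i, V i⟫)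
      = -∑ i, ∑ j, a i j * ⟪U j - U i, V j - V i⟫ := by
    nth_rewrite 2 [hswap]
    rw [← Finset.sum_add_distrib]
    rw [← Finset.sum_neg_distrib]
    refine Finset.sum_congr rfl fun i _ => ?_
    rw [← Finset.sum_add_distrib, ← Finset.sum_neg_distrib]
    refine Finset.sum_congr rfl fun j _ => ?_
    have h1 : U i - U j = -(U j - U i) := by abel
    rw [h1, inner_neg_left, inner_sub_right]
    ring
  linarith

/-- removing the diagonal filter when diagonal terms vanish. -/
lemma sum_filter_ne_eq (g : Fin N → Fin N → ℝ) (hdiag : ∀ i, g i i = 0) (i : Fin N) :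
    ∑ j ∈ Finset.univ.filter (fun j => j ≠ i), g i j = ∑ j, g i j := by
  rw [Finset.sum_filter]
  refine Finset.sum_congr rfl fun j _ => ?_
  by_cases h : j = i
  · subst h; simp [hdiag]
  · simp [h]

lemma force_pairing (hN : 0 < N) (κ₀ κ₁ κ₂ : ℝ) (φ : ℝ → ℝ) (R : Fin N → Fin N → ℝ)
    (hRsym : ∀ i j, R i j = R j i)
    (X V : Fin N → EuclideanSpace ℝ (Fin d)) :
    ∑ i, ⟪rcsForce N κ₀ κ₁ κ₂ φ R X V i, V i⟫ =
      -(κ₀/(2*(N:ℝ))) * ∑ i, ∑ j, φ ‖X i - X j‖ * ‖V j - V i‖^2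
      - (κ₁/(4*(N:ℝ))) * ∑ i, ∑ j, ((⟪V j - V i, X j - X i⟫) / ‖X j - X i‖)^2
      - (κ₂/(4*(N:ℝ))) * ∑ i, ∑ j,
          (‖X i - X j‖ - R i j) * ((⟪V j - V i, X j - X i⟫) / ‖X j - X i‖) := by
  set b : Fin N → Fin N → ℝ := fun i j =>
    (κ₁ * ((⟪V j - V i, X j - X i⟫) / ‖X j - X i‖) + κ₂ * (‖X i - X j‖ - R i j)) / ‖X j - X i‖
    with hb_def
  have hbsym : ∀ i j, b i j = b j i := by
    intro i j
    simp only [hb_def]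
    rw [show V i - V j = -(V j - V i) by abel, show X i - X j = -(X j - X i) by abel,
      inner_neg_neg, norm_neg, hRsym i j]
  have hexpand : ∀ i, ⟪rcsForce N κ₀ κ₁ κ₂ φ R X V i, V i⟫
      = (κ₀/(N:ℝ)) * ∑ j, φ ‖X i - X j‖ * ⟪V j - V i, V i⟫
        + (1/(2*(N:ℝ))) * ∑ j, b i j * ⟪X j - X i, V i⟫ := by
    intro i
    rw [rcsForce, inner_add_left, real_inner_smul_left, real_inner_smul_left,
      sum_inner, sum_inner]
    congr 2
    · exact Finset.sum_congr rfl fun j _ => real_inner_smul_left _ _ _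
    · rw [← sum_filter_ne_eq (fun i j => b i j * (⟪X j - X i, V i⟫ : ℝ))
        (fun k => by simp) i]
      exact Finset.sum_congr rfl fun j _ => real_inner_smul_left _ _ _
  rw [Finset.sum_congr rfl (fun i _ => hexpand i)]
  rw [Finset.sum_add_distrib, ← Finset.mul_sum, ← Finset.mul_sum]
  rw [sym_pair (fun i j => φ ‖X i - X j‖) (fun i j => by show φ ‖X i - X j‖ = φ ‖X j - X i‖; rw [norm_sub_rev]) V V]
  rw [sym_pair b hbsym X V]
  have hterm : ∀ i j : Fin N, b i j * ⟪X j - X i, V j - V i⟫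
      = κ₁ * ((⟪V j - V i, X j - X i⟫) / ‖X j - X i‖)^2
        + κ₂ * ((‖X i - X j‖ - R i j) * ((⟪V j - V i, X j - X i⟫) / ‖X j - X i‖)) := by
    intro i j
    have hbij : b i j = (κ₁ * ((⟪V j - V i, X j - X i⟫ : ℝ) / ‖X j - X i‖)
        + κ₂ * (‖X i - X j‖ - R i j)) / ‖X j - X i‖ := rfl
    rw [hbij, real_inner_comm (X j - X i) (V j - V i), div_mul_eq_mul_div, mul_div_assoc]
    ring
  have hsum2 : ∑ i, ∑ j, b i j * ⟪X j - X i, V j - V i⟫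
      = κ₁ * (∑ i, ∑ j, ((⟪V j - V i, X j - X i⟫) / ‖X j - X i‖)^2)
        + κ₂ * (∑ i, ∑ j, (‖X i - X j‖ - R i j) * ((⟪V j - V i, X j - X i⟫) / ‖X j - X i‖)) := by
    rw [Finset.mul_sum, Finset.mul_sum, ← Finset.sum_add_distrib]
    refine Finset.sum_congr rfl fun i _ => ?_
    rw [Finset.mul_sum, Finset.mul_sum, ← Finset.sum_add_distrib]
    exact Finset.sum_congr rfl fun j _ => hterm i j
  rw [hsum2]
  have hnorm : ∀ i j : Fin N, ⟪V j - V i, V j - V i⟫ = ‖V j - V i‖^2 :=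
    fun i j => real_inner_self_eq_norm_sq _
  rw [show (∑ i, ∑ j, φ ‖X i - X j‖ * ⟪V j - V i, V j - V i⟫)
      = ∑ i, ∑ j, φ ‖X i - X j‖ * ‖V j - V i‖^2 from
    Finset.sum_congr rfl fun i _ => Finset.sum_congr rfl fun j _ => by rw [hnorm]]
  ring

lemma norm_hasDeriv {A B : ℝ → EuclideanSpace ℝ (Fin d)} {A' B' : EuclideanSpace ℝ (Fin d)}
    {t : ℝ} (hA : HasDerivAt A A' t) (hB : HasDerivAt B B' t) (hne : A t ≠ B t) :
    HasDerivAt (fun u => ‖A u - B u‖) ((⟪A' - B', A t - B t⟫) / ‖A t - B t‖) t := by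
  have hAB : HasDerivAt (fun u => A u - B u) (A' - B') t := hA.sub hB
  have hm : HasDerivAt (fun u => (⟪A u - B u, A u - B u⟫ : ℝ))
      (⟪A t - B t, A' - B'⟫ + ⟪A' - B', A t - B t⟫) t := hAB.inner ℝ hAB
  have hzero : A t - B t ≠ 0 := sub_ne_zero.2 hne
  have hmpos : (0:ℝ) < ⟪A t - B t, A t - B t⟫ := by
    rw [real_inner_self_eq_norm_sq]
    exact pow_pos (norm_pos_iff.2 hzero) 2
  have hsqrt := (Real.hasDerivAt_sqrt hmpos.ne').comp t hm
  have hfun : (fun u => ‖A u - B u‖)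
      = fun u => Real.sqrt (⟪A u - B u, A u - B u⟫ : ℝ) := by
    funext u
    rw [real_inner_self_eq_norm_sq, Real.sqrt_sq (norm_nonneg _)]
  rw [hfun]
  refine hsqrt.congr_deriv ?_
  symm
  rw [show Real.sqrt (⟪A t - B t, A t - B t⟫:ℝ) = ‖A t - B t‖ by
    rw [real_inner_self_eq_norm_sq, Real.sqrt_sq (norm_nonneg _)]]
  rw [real_inner_comm (A t - B t) (A' - B')]
  field_simp
  ring

lemma potE_hasDeriv (κ₂ : ℝ) (R : Fin N → Fin N → ℝ)
    {x v : Fin N → ℝ → EuclideanSpace ℝ (Fin d)} {t : ℝ}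
    (hx : ∀ i, HasDerivAt (x i) (v i t) t)
    (hsep : ∀ i j, i ≠ j → x i t ≠ x j t) :
    HasDerivAt (fun u => potE κ₂ R (fun i => x i u))
      (κ₂/(4*(N:ℝ)) * ∑ i, ∑ j, (‖x i t - x j t‖ - R i j) *
        ((⟪v j t - v i t, x j t - x i t⟫) / ‖x j t - x i t‖)) t := by
  set g : Fin N → Fin N → ℝ := fun i j => (‖x i t - x j t‖ - R i j) *
        ((⟪v j t - v i t, x j t - x i t⟫) / ‖x j t - x i t‖) with hg_def
  have hterm : ∀ i j : Fin N, j ≠ i →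
      HasDerivAt (fun u => (‖x i u - x j u‖ - R i j)^2) (2 * g i j) t := by
    intro i j hji
    have hn := norm_hasDeriv (hA := hx i) (hB := hx j) (hsep i j hji.symm)
    have h2 := ((hn.sub_const (R i j)).pow 2)
    refine h2.congr_deriv ?_
    symm
    have hginner : (⟪v i t - v j t, x i t - x j t⟫:ℝ) = ⟪v j t - v i t, x j t - x i t⟫ := by
      rw [show v i t - v j t = -(v j t - v i t) by abel,
        show x i t - x j t = -(x j t - x i t) by abel, inner_neg_neg]
    have hgnorm : ‖x i t - x j t‖ = ‖x j t - x i t‖ := norm_sub_rev _ _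
    simp only [hg_def]
    rw [hginner]
    nth_rewrite 3 [hgnorm]
    ring
  have hsum : HasDerivAt (fun u => ∑ i, ∑ j ∈ Finset.univ.filter (fun j => j ≠ i),
      (‖x i u - x j u‖ - R i j)^2)
      (∑ i, ∑ j ∈ Finset.univ.filter (fun j => j ≠ i), 2 * g i j) t := by
    apply HasDerivAt.fun_sum
    intro i _
    apply HasDerivAt.fun_sum
    intro j hj
    exact hterm i j (Finset.mem_filter.1 hj).2
  have hmain := hsum.const_mul (κ₂/(8*(N:ℝ)))
  have hpe : (fun u => potE κ₂ R (fun i => x i u))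
      = fun u => κ₂/(8*(N:ℝ)) * ∑ i, ∑ j ∈ Finset.univ.filter (fun j => j ≠ i),
          (‖x i u - x j u‖ - R i j)^2 := rfl
  rw [hpe]
  refine hmain.congr_deriv ?_
  symm
  have hdg : ∀ i : Fin N, g i i = 0 := by
    intro i
    simp [hg_def]
  have hfull : ∀ i : Fin N, (∑ j ∈ Finset.univ.filter (fun j => j ≠ i), 2 * g i j)
      = ∑ j, 2 * g i j := fun i =>
    sum_filter_ne_eq (fun i j => 2 * g i j) (fun k => by show 2 * g k k = 0; rw [hdg k]; ring) i
  rw [Finset.sum_congr rfl fun i _ => hfull i]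
  rw [Finset.mul_sum, Finset.mul_sum]
  refine Finset.sum_congr rfl fun i _ => ?_
  rw [Finset.mul_sum, Finset.mul_sum, ← Finset.mul_sum, ← Finset.mul_sum]
  rw [show (∑ j, 2 * g i j) = 2 * ∑ j, g i j from by rw [Finset.mul_sum]]
  ring

end AuxAlg

section AuxInt
lemma lintegral_Ioi_le_of_intervalIntegral {D : ℝ → ℝ} {B : ℝ}
    (hDcont : ∀ t : ℝ, 0 ≤ t → ContinuousAt D t) (hDnn : ∀ t, 0 ≤ D t)
    (hB : ∀ T : ℝ, 0 ≤ T → (∫ u in (0:ℝ)..T, D u) ≤ B) :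
    ∫⁻ t in Set.Ioi (0:ℝ), ENNReal.ofReal (D t) ≤ ENNReal.ofReal B := by
  have hunion : (⋃ n : ℕ, Ioc ((n:ℝ)) (n+1)) = Ioi (0:ℝ) := by
    ext t
    simp only [mem_iUnion, mem_Ioc, mem_Ioi]
    constructor
    · rintro ⟨n, hn, -⟩
      exact lt_of_le_of_lt (by positivity) hn
    · intro ht
      refine ⟨⌈t⌉₊ - 1, ?_, ?_⟩
      · have h1 : (1:ℕ) ≤ ⌈t⌉₊ := Nat.one_le_ceil_iff.2 ht
        have h2 : ((⌈t⌉₊ - 1 : ℕ) : ℝ) = (⌈t⌉₊ : ℝ) - 1 := by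
          push_cast [h1]; ring
        rw [h2]
        have := Nat.ceil_lt_add_one ht.le
        linarith
      · have h1 : (1:ℕ) ≤ ⌈t⌉₊ := Nat.one_le_ceil_iff.2 ht
        have h2 : ((⌈t⌉₊ - 1 : ℕ) : ℝ) = (⌈t⌉₊ : ℝ) - 1 := by
          push_cast [h1]; ring
        rw [h2]
        have := Nat.le_ceil t
        linarith
  have hdisj : Pairwise (Function.onFun Disjoint fun n : ℕ => Ioc ((n:ℝ)) (n+1)) := by
    intro i j hij
    simp only [Function.onFun]
    rw [Set.Ioc_disjoint_Ioc]
    rcases hij.lt_or_gt with h | h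
    · have : (i:ℝ) + 1 ≤ (j:ℝ) := by exact_mod_cast h
      calc min ((i:ℝ)+1) ((j:ℝ)+1) ≤ (i:ℝ)+1 := min_le_left _ _
        _ ≤ (j:ℝ) := this
        _ ≤ max (i:ℝ) (j:ℝ) := le_max_right _ _
    · have : (j:ℝ) + 1 ≤ (i:ℝ) := by exact_mod_cast h
      calc min ((i:ℝ)+1) ((j:ℝ)+1) ≤ (j:ℝ)+1 := min_le_right _ _
        _ ≤ (i:ℝ) := this
        _ ≤ max (i:ℝ) (j:ℝ) := le_max_left _ _
  rw [← hunion, lintegral_iUnion (fun _ => measurableSet_Ioc) hdisj]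
  have hIocBound : ∀ m : ℕ,
      (∑ n ∈ Finset.range m, ∫⁻ t in Ioc ((n:ℝ)) (n+1), ENNReal.ofReal (D t))
        ≤ ENNReal.ofReal B := by
    intro m
    have heq : (∑ n ∈ Finset.range m, ∫⁻ t in Ioc ((n:ℝ)) (n+1), ENNReal.ofReal (D t))
        = ∫⁻ t in Ioc (0:ℝ) m, ENNReal.ofReal (D t) := by
      induction m with
      | zero => simp
      | succ k ih =>
        rw [Finset.sum_range_succ, ih]
        rw [← lintegral_union measurableSet_Ioc
          (Set.Ioc_disjoint_Ioc_of_le (a := (0:ℝ)) (b := (k:ℝ)) (c := (k:ℝ)) (d := (k:ℝ)+1) le_rfl)]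
        rw [Set.Ioc_union_Ioc_eq_Ioc (by positivity) (by linarith)]
        norm_num
    rw [heq]
    have hContOn : ContinuousOn D (Icc (0:ℝ) m) :=
      fun u hu => (hDcont u hu.1).continuousWithinAt
    have hInt : IntegrableOn D (Ioc (0:ℝ) m) volume :=
      (hContOn.integrableOn_Icc).mono_set Ioc_subset_Icc_self
    rw [← MeasureTheory.ofReal_integral_eq_lintegral_ofReal hInt
      (Filter.Eventually.of_forall (fun t => hDnn t))]
    apply ENNReal.ofReal_le_ofReal
    rw [← intervalIntegral.integral_of_le (by positivity : (0:ℝ) ≤ (m:ℝ))]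
    exact hB m (by positivity)
  rw [ENNReal.tsum_eq_iSup_nat]
  exact iSup_le hIocBound

end AuxInt

set_option maxHeartbeats 1000000 in
/-- Integrability of relative momenta: for a global solution of the RCS model with bonding
force with `κ₀, κ₂ > 0` and communication weight bounded below by `φ_m > 0` on `[0, r̄]`,
and any `C_L ∈ (0,1)` with `C_L|w_j − w_i| ≤ |v_j − v_i|`, one has
`∫₀^∞ ∑_{i,j} |w_j(t) − w_i(t)|² dt ≤ 2N·E(0)/(κ₀·C_L²·φ_m) < ∞`. -/
theorem relative_momenta_integrable
    (d N : ℕ) (hd : 1 ≤ d) (hN : 2 ≤ N)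
    (c κ₀ κ₁ κ₂ : ℝ) (hc : 0 < c) (hκ₀ : 0 < κ₀) (hκ₁ : 0 ≤ κ₁) (hκ₂ : 0 < κ₂)
    (φ : ℝ → ℝ) (φM : ℝ) (hφ : LocallyLipschitz φ)
    (hφ0 : ∀ r, 0 ≤ φ r) (hφM : ∀ r, φ r ≤ φM)
    (R : Fin N → Fin N → ℝ) (hR0 : ∀ i, R i i = 0)
    (hRsym : ∀ i j, R i j = R j i) (hRnn : ∀ i j, 0 ≤ R i j)
    (Rmax : ℝ)
    (hRmax : IsGreatest {r : ℝ | ∃ i j : Fin N, i ≠ j ∧ r = R i j} Rmax)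
    (x v : Fin N → ℝ → EuclideanSpace ℝ (Fin d))
    (hsol : IsRCSSol N c κ₀ κ₁ κ₂ φ R ⊤ x v)
    (φm : ℝ) (hφm : 0 < φm)
    (hφmle : ∀ r : ℝ, 0 ≤ r →
      r ≤ Rmax + Real.sqrt (4 * N * (totE c κ₂ R (fun i => x i 0) (fun i => v i 0) - N) / κ₂) →
      φm ≤ φ r)
    (CL : ℝ) (hCL0 : 0 < CL) (hCL1 : CL < 1)
    (hCL : ∀ t ∈ dom ⊤, ∀ i j : Fin N,
      CL * ‖what c (v j t) - what c (v i t)‖ ≤ ‖v j t - v i t‖) :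
    ∫⁻ t in Set.Ioi (0:ℝ),
        ENNReal.ofReal (∑ i, ∑ j, ‖what c (v j t) - what c (v i t)‖ ^ 2)
      ≤ ENNReal.ofReal
          (2 * N * totE c κ₂ R (fun i => x i 0) (fun i => v i 0) / (κ₀ * CL ^ 2 * φm)) := by
  classical
  have hN0 : 0 < N := lt_of_lt_of_le two_pos hN
  have hNR : (0:ℝ) < N := by exact_mod_cast hN0
  have hdomall : ∀ t : ℝ, 0 ≤ t → t ∈ dom ⊤ := fun t ht => ⟨ht, ENNReal.ofReal_lt_top⟩
  have hv : ∀ t : ℝ, 0 ≤ t → ∀ i, ‖v i t‖ < c := fun t ht => (hsol t (hdomall t ht)).1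
  have hsep : ∀ t : ℝ, 0 ≤ t → ∀ i j, i ≠ j → x i t ≠ x j t :=
    fun t ht => (hsol t (hdomall t ht)).2.1
  have hx : ∀ t : ℝ, 0 ≤ t → ∀ i, HasDerivAt (x i) (v i t) t :=
    fun t ht => (hsol t (hdomall t ht)).2.2.1
  have hwd : ∀ t : ℝ, 0 ≤ t → ∀ i, HasDerivAt (fun s => what c (v i s))
      (rcsForce N κ₀ κ₁ κ₂ φ R (fun k => x k t) (fun k => v k t) i) t :=
    fun t ht => (hsol t (hdomall t ht)).2.2.2
  set E0 : ℝ := totE c κ₂ R (fun i => x i 0) (fun i => v i 0) with hE0_def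
  set Et : ℝ → ℝ := fun t => totE c κ₂ R (fun i => x i t) (fun i => v i t) with hEt_def
  have hEt0 : Et 0 = E0 := rfl
  set D : ℝ → ℝ := fun t => ∑ i, ∑ j, ‖what c (v j t) - what c (v i t)‖^2 with hD_def
  have hDnn : ∀ t, 0 ≤ D t := by
    intro t
    exact Finset.sum_nonneg fun i _ => Finset.sum_nonneg fun j _ => sq_nonneg _
  have hDcont : ∀ t, 0 ≤ t → ContinuousAt D t := by
    intro t ht
    have hwc : ∀ k : Fin N, ContinuousAt (fun u => what c (v k u)) t :=
      fun k => (hwd t ht k).continuousAt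
    apply tendsto_finset_sum
    intro i _
    apply tendsto_finset_sum
    intro j _
    exact (((hwc j).sub (hwc i)).norm).pow 2
  have hkinE : ∀ t : ℝ, kinE c (fun i => v i t) = ∑ i, Kk c (‖v i t‖^2) := fun _ => rfl
  set DE : ℝ → ℝ := fun t =>
      -(κ₀/(2*(N:ℝ))) * ∑ i, ∑ j, φ ‖x i t - x j t‖ * ‖v j t - v i t‖^2
      - (κ₁/(4*(N:ℝ))) * ∑ i, ∑ j,
          ((⟪v j t - v i t, x j t - x i t⟫ : ℝ) / ‖x j t - x i t‖)^2
    with hDE_def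
  have hEt_eq : Et = fun u => (∑ i, Kk c (‖v i u‖^2)) + potE κ₂ R (fun i => x i u) := rfl
  have hEderiv : ∀ t : ℝ, 0 < t → HasDerivAt Et (DE t) t := by
    intro t ht
    have hkinD : HasDerivAt (fun u => ∑ i, Kk c (‖v i u‖^2))
        (∑ i, (⟪rcsForce N κ₀ κ₁ κ₂ φ R (fun k => x k t) (fun k => v k t) i, v i t⟫ : ℝ)) t := by
      apply HasDerivAt.fun_sum
      intro i _
      exact kin_deriv hc (fun u hu => hv u hu i) (fun u hu => hwd u hu i) ht
    have hpotD := potE_hasDeriv (d := d) (N := N) κ₂ R (fun i => hx t ht.le i) (hsep t ht.le)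
    have hsum := hkinD.add hpotD
    rw [hEt_eq]
    refine hsum.congr_deriv ?_
    symm
    have hfp := force_pairing (d := d) hN0 κ₀ κ₁ κ₂ φ R hRsym
      (fun k => x k t) (fun k => v k t)
    rw [hDE_def]
    simp only
    rw [hfp]
    ring
  have hEcont : ContinuousOn Et (Ici 0) := by
    intro t ht
    rw [hEt_eq]
    apply ContinuousWithinAt.add
    · apply tendsto_finset_sum
      intro i _
      exact kin_cont hc (fun u hu => hv u hu i) (fun u hu => hwd u hu i) ht
    · exact (potE_hasDeriv (d := d) (N := N) κ₂ R (fun i => hx t ht i)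
        (hsep t ht)).continuousAt.continuousWithinAt
  have hDEnp : ∀ t : ℝ, DE t ≤ 0 := by
    intro t
    have hS1 : 0 ≤ ∑ i, ∑ j, φ ‖x i t - x j t‖ * ‖v j t - v i t‖^2 :=
      Finset.sum_nonneg fun i _ => Finset.sum_nonneg fun j _ =>
        mul_nonneg (hφ0 _) (sq_nonneg _)
    have hS2 : 0 ≤ ∑ i, ∑ j, ((⟪v j t - v i t, x j t - x i t⟫ : ℝ) / ‖x j t - x i t‖)^2 :=
      Finset.sum_nonneg fun i _ => Finset.sum_nonneg fun j _ => sq_nonneg _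
    have h1 : 0 ≤ κ₀/(2*(N:ℝ)) := by positivity
    have h2 : 0 ≤ κ₁/(4*(N:ℝ)) := by positivity
    rw [hDE_def]
    simp only
    nlinarith [mul_nonneg h1 hS1, mul_nonneg h2 hS2]
  have hEmono : AntitoneOn Et (Ici 0) := by
    apply antitoneOn_of_deriv_nonpos (convex_Ici 0) hEcont
    · intro t ht
      rw [interior_Ici] at ht
      exact (hEderiv t ht).differentiableAt.differentiableWithinAt
    · intro t ht
      rw [interior_Ici] at ht
      rw [(hEderiv t ht).deriv]
      exact hDEnp t
  have hkinEN : ∀ t, 0 ≤ t → (N:ℝ) ≤ ∑ i, Kk c (‖v i t‖^2) := by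
    intro t ht
    have h1 : ∀ i : Fin N, (1:ℝ) ≤ Kk c (‖v i t‖^2) := fun i =>
      one_le_Kk hc (norm_sq_mem hc (hv t ht i)).1 (norm_sq_mem hc (hv t ht i)).2
    calc (N:ℝ) = ∑ _i : Fin N, (1:ℝ) := by simp
      _ ≤ ∑ i, Kk c (‖v i t‖^2) := Finset.sum_le_sum fun i _ => h1 i
  have hpotnn : ∀ X : Fin N → EuclideanSpace ℝ (Fin d), 0 ≤ potE κ₂ R X := by
    intro X
    apply mul_nonneg (by positivity)
    exact Finset.sum_nonneg fun i _ => Finset.sum_nonneg fun j _ => sq_nonneg _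
  have hEt_pt : ∀ u : ℝ, Et u = (∑ i, Kk c (‖v i u‖^2)) + potE κ₂ R (fun i => x i u) :=
    fun _ => rfl
  have hEtN : ∀ t, 0 ≤ t → (N:ℝ) ≤ Et t := by
    intro t ht
    rw [hEt_pt t]
    have := hpotnn (fun i => x i t)
    linarith [hkinEN t ht]
  have hEle : ∀ t, 0 ≤ t → Et t ≤ E0 := by
    intro t ht
    have := hEmono self_mem_Ici ht ht
    rwa [hEt0] at this
  have hE0N : (N:ℝ) ≤ E0 := by rw [← hEt0]; exact hEtN 0 le_rfl
  have hRmax_nn : 0 ≤ Rmax := by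
    obtain ⟨i, j, hij, hEq⟩ := hRmax.1
    rw [hEq]; exact hRnn i j
  set rbar : ℝ := Rmax + Real.sqrt (4 * N * (E0 - N) / κ₂) with hrbar_def
  have hdist : ∀ t, 0 ≤ t → ∀ i j : Fin N, ‖x i t - x j t‖ ≤ rbar := by
    intro t ht i j
    by_cases hij : i = j
    · subst hij
      simp only [sub_self, norm_zero]
      rw [hrbar_def]
      have := Real.sqrt_nonneg (4 * N * (E0 - N) / κ₂)
      linarith
    · set q : ℝ := (‖x i t - x j t‖ - R i j)^2 with hq_def
      have hmemj : j ∈ Finset.univ.filter (fun l => l ≠ i) := by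
        simp only [Finset.mem_filter, Finset.mem_univ, true_and]
        exact fun h => hij h.symm
      have hmemi : i ∈ Finset.univ.filter (fun l => l ≠ j) := by
        simp only [Finset.mem_filter, Finset.mem_univ, true_and]
        exact hij
      have hterm1 : q ≤ ∑ l ∈ Finset.univ.filter (fun l => l ≠ i),
          (‖x i t - x l t‖ - R i l)^2 := by
        rw [hq_def]
        exact Finset.single_le_sum (f := fun l => (‖x i t - x l t‖ - R i l)^2)
          (fun l _ => sq_nonneg _) hmemj
      have hterm2 : q ≤ ∑ l ∈ Finset.univ.filter (fun l => l ≠ j),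
          (‖x j t - x l t‖ - R j l)^2 := by
        have hqq : q = (‖x j t - x i t‖ - R j i)^2 := by
          rw [hq_def, norm_sub_rev, hRsym i j]
        rw [hqq]
        exact Finset.single_le_sum (f := fun l => (‖x j t - x l t‖ - R j l)^2)
          (fun l _ => sq_nonneg _) hmemi
      have hsum : 2*q ≤ ∑ k, ∑ l ∈ Finset.univ.filter (fun l => l ≠ k),
          (‖x k t - x l t‖ - R k l)^2 := by
        have hsub : ({i, j} : Finset (Fin N)) ⊆ Finset.univ := Finset.subset_univ _
        have hS := Finset.sum_le_sum_of_subset_of_nonneg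
          (f := fun k => ∑ l ∈ Finset.univ.filter (fun l => l ≠ k), (‖x k t - x l t‖ - R k l)^2)
          hsub (fun k _ _ => Finset.sum_nonneg fun l _ => sq_nonneg _)
        rw [Finset.sum_pair hij] at hS
        linarith
      have hpotLB : κ₂/(8*(N:ℝ)) * (2*q) ≤ potE κ₂ R (fun k => x k t) := by
        have := mul_le_mul_of_nonneg_left hsum (by positivity : (0:ℝ) ≤ κ₂/(8*(N:ℝ)))
        exact this
      have hpotUB : potE κ₂ R (fun k => x k t) ≤ E0 - N := by
        have h1 := hEle t ht
        rw [hEt_pt t] at h1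
        linarith [hkinEN t ht]
      have hq4 : q ≤ 4*N*(E0 - N)/κ₂ := by
        have hA : κ₂/(8*(N:ℝ))*(2*q) ≤ E0 - (N:ℝ) := le_trans hpotLB hpotUB
        have hB := mul_le_mul_of_nonneg_right hA (by positivity : (0:ℝ) ≤ 4*(N:ℝ))
        have hC : κ₂/(8*(N:ℝ))*(2*q)*(4*(N:ℝ)) = q * κ₂ := by
          field_simp; ring
        rw [le_div_iff₀ hκ₂]
        calc q * κ₂ = κ₂/(8*(N:ℝ))*(2*q)*(4*(N:ℝ)) := hC.symm
          _ ≤ (E0 - (N:ℝ)) * (4*(N:ℝ)) := hB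
          _ = 4*(N:ℝ)*(E0 - (N:ℝ)) := by ring
      have hsqle : ‖x i t - x j t‖ - R i j ≤ Real.sqrt (4*N*(E0-N)/κ₂) := by
        have h1 : ‖x i t - x j t‖ - R i j ≤ |‖x i t - x j t‖ - R i j| := le_abs_self _
        have h2 : |‖x i t - x j t‖ - R i j| = Real.sqrt q := by
          rw [hq_def, Real.sqrt_sq_eq_abs]
        have h3 : Real.sqrt q ≤ Real.sqrt (4*N*(E0-N)/κ₂) := Real.sqrt_le_sqrt hq4
        linarith
      have hRle : R i j ≤ Rmax := hRmax.2 ⟨i, j, hij, rfl⟩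
      rw [hrbar_def]
      linarith
  have hφge : ∀ t, 0 ≤ t → ∀ i j : Fin N, φm ≤ φ ‖x i t - x j t‖ := by
    intro t ht i j
    exact hφmle _ (norm_nonneg _) (hdist t ht i j)
  have hCL' : ∀ t, 0 ≤ t → ∀ i j : Fin N,
      CL * ‖what c (v j t) - what c (v i t)‖ ≤ ‖v j t - v i t‖ :=
    fun t ht => hCL t (hdomall t ht)
  set co : ℝ := κ₀ * CL^2 * φm / (2*(N:ℝ)) with hco_def
  have hco_pos : 0 < co := by
    rw [hco_def]
    apply div_pos _ (by positivity)
    exact mul_pos (mul_pos hκ₀ (pow_pos hCL0 2)) hφm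
  have hdiss : ∀ t, 0 < t → DE t + co * D t ≤ 0 := by
    intro t ht
    have hkey : φm * CL^2 * D t ≤ ∑ i, ∑ j, φ ‖x i t - x j t‖ * ‖v j t - v i t‖^2 := by
      rw [hD_def]
      simp only
      rw [Finset.mul_sum]
      apply Finset.sum_le_sum
      intro i _
      rw [Finset.mul_sum]
      apply Finset.sum_le_sum
      intro j _
      have h1 := hCL' t ht.le i j
      have h2 : (CL * ‖what c (v j t) - what c (v i t)‖)^2 ≤ ‖v j t - v i t‖^2 :=
        pow_le_pow_left₀ (by positivity) h1 2
      have h3 := hφge t ht.le i j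
      calc φm * CL^2 * ‖what c (v j t) - what c (v i t)‖^2
          = φm * (CL * ‖what c (v j t) - what c (v i t)‖)^2 := by ring
        _ ≤ φm * ‖v j t - v i t‖^2 := mul_le_mul_of_nonneg_left h2 hφm.le
        _ ≤ φ ‖x i t - x j t‖ * ‖v j t - v i t‖^2 :=
            mul_le_mul_of_nonneg_right h3 (sq_nonneg _)
    have hS2 : 0 ≤ ∑ i, ∑ j, ((⟪v j t - v i t, x j t - x i t⟫ : ℝ) / ‖x j t - x i t‖)^2 :=
      Finset.sum_nonneg fun i _ => Finset.sum_nonneg fun j _ => sq_nonneg _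
    have h4 := mul_le_mul_of_nonneg_left hkey
      (le_of_lt (div_pos hκ₀ (by positivity : (0:ℝ) < 2*(N:ℝ))))
    have h5 : co * D t = (κ₀/(2*(N:ℝ))) * (φm * CL^2 * D t) := by
      rw [hco_def]; ring
    have h6 : 0 ≤ (κ₁/(4*(N:ℝ))) *
        ∑ i, ∑ j, ((⟪v j t - v i t, x j t - x i t⟫ : ℝ) / ‖x j t - x i t‖)^2 :=
      mul_nonneg (by positivity) hS2
    rw [hDE_def]
    simp only
    linarith
  set P : ℝ → ℝ := fun T => ∫ u in (0:ℝ)..T, D u with hP_def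
  have hDInt : ∀ T : ℝ, 0 ≤ T → IntervalIntegrable D MeasureTheory.volume 0 T := by
    intro T hT
    apply ContinuousOn.intervalIntegrable
    rw [uIcc_of_le hT]
    exact fun u hu => (hDcont u hu.1).continuousWithinAt
  have hPcont : ContinuousOn P (Ici 0) := by
    intro T hTmem0
    have hT : (0:ℝ) ≤ T := hTmem0
    have hint : IntegrableOn D (uIcc 0 (T+1)) MeasureTheory.volume := by
      rw [uIcc_of_le (by linarith : (0:ℝ) ≤ T+1)]
      exact ContinuousOn.integrableOn_Icc (fun u hu => (hDcont u hu.1).continuousWithinAt)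
    have h1 := intervalIntegral.continuousOn_primitive_interval hint
    have hTmem : T ∈ uIcc (0:ℝ) (T+1) := by
      rw [uIcc_of_le (by linarith : (0:ℝ) ≤ T+1)]
      exact ⟨hT, by linarith⟩
    have h2 : ContinuousWithinAt P (uIcc (0:ℝ) (T+1)) T := h1 T hTmem
    apply h2.mono_of_mem_nhdsWithin
    rw [uIcc_of_le (by linarith : (0:ℝ) ≤ T+1), ← Set.Ici_inter_Iic]
    exact Filter.inter_mem self_mem_nhdsWithin
      (mem_nhdsWithin_of_mem_nhds (Iic_mem_nhds (by linarith)))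
  have hPderiv : ∀ t, 0 < t → HasDerivAt P (D t) t := by
    intro t ht
    apply intervalIntegral.integral_hasDerivAt_right (hDInt t ht.le) ?_ (hDcont t ht.le)
    have hcontOn : ContinuousOn D (Ioi (0:ℝ)) :=
      fun u hu => (hDcont u (le_of_lt hu)).continuousWithinAt
    exact hcontOn.stronglyMeasurableAtFilter isOpen_Ioi t ht
  set G : ℝ → ℝ := fun t => Et t + co * P t with hG_def
  have hGmono : AntitoneOn G (Ici 0) := by
    apply antitoneOn_of_deriv_nonpos (convex_Ici 0)
    · exact hEcont.add (continuousOn_const.mul hPcont)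
    · intro t ht
      rw [interior_Ici] at ht
      exact ((hEderiv t ht).add ((hPderiv t ht).const_mul co)).differentiableAt.differentiableWithinAt
    · intro t ht
      rw [interior_Ici] at ht
      rw [show deriv G t = DE t + co * D t from ((hEderiv t ht).add ((hPderiv t ht).const_mul co)).deriv]
      exact hdiss t ht
  have hPbound : ∀ T, 0 ≤ T → P T ≤ E0 / co := by
    intro T hT
    have h1 : G T ≤ G 0 := hGmono self_mem_Ici hT hT
    have hP0 : P 0 = 0 := intervalIntegral.integral_same
    have h2 : Et T + co * P T ≤ E0 := by
      have hG0 : G 0 = E0 := by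
        show Et 0 + co * P 0 = E0
        rw [hEt0, hP0]; ring
      have hGT : G T = Et T + co * P T := rfl
      rw [hGT, hG0] at h1
      exact h1
    have h3 : 0 ≤ Et T := le_trans (by positivity) (hEtN T hT)
    rw [le_div_iff₀ hco_pos]
    nlinarith
  have hfinal : ∀ T : ℝ, 0 ≤ T → (∫ u in (0:ℝ)..T, D u) ≤ 2*N*E0/(κ₀*CL^2*φm) := by
    intro T hT
    have h1 := hPbound T hT
    have h2 : E0 / co = 2*N*E0/(κ₀*CL^2*φm) := by
      rw [hco_def]
      rw [div_div_eq_mul_div]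
      ring
    rw [hP_def] at h1
    simp only at h1
    linarith [h2 ▸ h1]
  show ∫⁻ t in Set.Ioi (0:ℝ), ENNReal.ofReal (D t)
    ≤ ENNReal.ofReal (2 * N * E0 / (κ₀ * CL ^ 2 * φm))
  exact lintegral_Ioi_le_of_intervalIntegral hDcont hDnn hfinal

end
end
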